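/- arXiv:2602.08714 — 8 statements merged into one kernel-verified Lean document; each statement's English description precedes it below -/
import Mathlib

section
/- Let n ≥ 2 and m > n. Suppose X = (X_1,…,X_n) is an allocation of the m goods such that for every agent i ∈ {1,…,n−1} the bundle X_i is a singleton, X_n consists of all remaining goods, and for every agent i ∈ {1,…,n−1} and every good g ∈ X_n it holds that v_i(X_i) ≥ v_i(g). Then X is a (1/(m−n))-EFX allocation. -/
/-- If in an allocation the first `n-1` agents each hold a singleton bundle,
agent `n` holds all remaining goods, and each of the first `n-1` agents values her own
bundle at least as much as any single good in agent `n`'s bundle, then the allocation is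
`1/(m-n)`-EFX. -/
theorem stmt_0 (n m : ℕ) (hn : 2 ≤ n) (hm : n < m)
    (v : Fin n → Fin m → ℝ) (hv : ∀ i g, 0 ≤ v i g)
    (X : Fin n → Finset (Fin m))
    (hdisj : ∀ i j : Fin n, i ≠ j → Disjoint (X i) (X j))
    (hcover : ∀ g : Fin m, ∃ i : Fin n, g ∈ X i)
    (hsing : ∀ i : Fin n, (i : ℕ) < n - 1 → (X i).card = 1)
    (hlast : ∀ g : Fin m, g ∈ X ⟨n - 1, by omega⟩ ↔
      ∀ i : Fin n, (i : ℕ) < n - 1 → g ∉ X i)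
    (hval : ∀ i : Fin n, (i : ℕ) < n - 1 →
      ∀ g ∈ X ⟨n - 1, by omega⟩, v i g ≤ (X i).sum (v i)) :
    ∀ i j : Fin n, X j ≠ ∅ → ∀ g ∈ X j,
      (1 / ((m : ℝ) - (n : ℝ))) * ((X j).erase g).sum (v i) ≤ (X i).sum (v i) := by
  classical
  intro i j hjne g hg
  have hmn1 : (1:ℝ) ≤ (m:ℝ) - n := by
    have h1 : (n:ℝ) + 1 ≤ m := by exact_mod_cast hm
    linarith
  have hpos : (0:ℝ) < (m:ℝ) - n := by linarith
  have hfac0 : 0 ≤ 1 / ((m:ℝ) - n) := by positivity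
  have hfac1 : 1 / ((m:ℝ) - n) ≤ 1 := by
    rw [div_le_one hpos]; linarith
  have hXi0 : 0 ≤ (X i).sum (v i) := Finset.sum_nonneg fun x _ => hv i x
  have hS0 : 0 ≤ ((X j).erase g).sum (v i) := Finset.sum_nonneg fun x _ => hv i x
  by_cases hij : i = j
  · subst hij
    have hS : ((X i).erase g).sum (v i) ≤ (X i).sum (v i) :=
      Finset.sum_le_sum_of_subset_of_nonneg (Finset.erase_subset _ _)
        (fun x _ _ => hv i x)
    calc 1 / ((m:ℝ) - n) * ((X i).erase g).sum (v i)
        ≤ ((X i).erase g).sum (v i) := mul_le_of_le_one_left hS0 hfac1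
      _ ≤ (X i).sum (v i) := hS
  · by_cases hjlt : (j : ℕ) < n - 1
    · -- X j is a singleton, so the erased set is empty
      obtain ⟨a, ha⟩ := Finset.card_eq_one.mp (hsing j hjlt)
      rw [ha] at hg ⊢
      rw [Finset.mem_singleton] at hg
      subst hg
      simp [hXi0]
    · -- j is the last agent
      have hjlast : j = ⟨n - 1, by omega⟩ := by
        apply Fin.ext
        have := j.isLt
        simp only
        omega
      have hilt : (i : ℕ) < n - 1 := by
        have := i.isLt
        have : (i : ℕ) ≠ n - 1 := by
          intro h
          apply hij
          apply Fin.ext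
          rw [hjlast, h]
        omega
      -- bound the cardinality of X j
      have hsum : ∑ k : Fin n, (X k).card ≤ m := by
        calc ∑ k : Fin n, (X k).card = (Finset.univ.biUnion X).card :=
              (Finset.card_biUnion (fun a _ b _ hab => hdisj a b hab)).symm
          _ ≤ (Finset.univ : Finset (Fin m)).card :=
              Finset.card_le_card (Finset.subset_univ _)
          _ = m := by simp
      have hsplit : ∑ k ∈ Finset.univ.erase j, (X k).card + (X j).card
          = ∑ k : Fin n, (X k).card :=
        Finset.sum_erase_add _ _ (Finset.mem_univ _)
      have hones : ∀ k ∈ Finset.univ.erase j, (X k).card = 1 := by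
        intro k hk
        have hkne : k ≠ j := (Finset.mem_erase.mp hk).1
        have : (k:ℕ) ≠ n - 1 := by
          intro h
          exact hkne (by rw [hjlast]; exact Fin.ext h)
        have := k.isLt
        exact hsing k (by omega)
      have herase_card : (Finset.univ.erase j).card = n - 1 := by
        rw [Finset.card_erase_of_mem (Finset.mem_univ _), Finset.card_univ,
          Fintype.card_fin]
      have hsum1 : ∑ k ∈ Finset.univ.erase j, (X k).card = n - 1 := by
        rw [Finset.sum_congr rfl hones, Finset.sum_const, herase_card, smul_eq_mul,
          mul_one]
      have hcardj : (X j).card ≤ m - n + 1 := by omega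
      have hcarde : ((X j).erase g).card ≤ m - n := by
        rw [Finset.card_erase_of_mem hg]
        omega
      -- value bound on each good in the erased set
      set B := (X i).sum (v i) with hB
      have hbd : ∀ x ∈ (X j).erase g, v i x ≤ B := by
        intro x hx
        have hx' : x ∈ X j := Finset.mem_of_mem_erase hx
        rw [hjlast] at hx'
        exact hval i hilt x hx'
      have hSle : ((X j).erase g).sum (v i) ≤ (((X j).erase g).card : ℝ) * B := by
        have := Finset.sum_le_card_nsmul _ _ B hbd
        simpa [nsmul_eq_mul] using this
      have hcast : (((X j).erase g).card : ℝ) ≤ (m:ℝ) - n := by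
        have h1 : (((X j).erase g).card : ℝ) ≤ ((m - n : ℕ) : ℝ) := by
          exact_mod_cast hcarde
        have h2 : ((m - n : ℕ) : ℝ) = (m:ℝ) - n := by
          have := Nat.cast_sub (le_of_lt hm) (R := ℝ)
          simpa using this
        linarith
      have hSle2 : ((X j).erase g).sum (v i) ≤ ((m:ℝ) - n) * B := by
        calc ((X j).erase g).sum (v i) ≤ (((X j).erase g).card : ℝ) * B := hSle
          _ ≤ ((m:ℝ) - n) * B := by
              apply mul_le_mul_of_nonneg_right hcast hXi0
      calc 1 / ((m:ℝ) - n) * ((X j).erase g).sum (v i)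
          ≤ 1 / ((m:ℝ) - n) * (((m:ℝ) - n) * B) :=
            mul_le_mul_of_nonneg_left hSle2 hfac0
        _ = B := by field_simp
end

section
/- Let n ≥ 2 and m > n + 2. For every function A that maps each profile of preference rankings (one strict total order over the m goods per agent) to an allocation of the goods, there exist a profile of rankings ≻ = (≻_1,…,≻_n) and a profile of nonnegative additive valuations (v_1,…,v_n) consistent with ≻ such that the allocation A(≻) is not α-EFX with respect to (v_1,…,v_n) for any α > 1/(m−n). -/
/-!
All agents receive the same ranking: goods in order of increasing index, so a consistent
valuation is any antitone `v`. Let `X` be the allocation the algorithm returns.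

* If some bundle is empty, some other bundle holds two goods (`m > n`), and under unit values
  the agent with nothing envies it even after removing one good.
* Otherwise let `i` be the agent whose best good `b` is worst among the agents' best goods.
  If some other bundle holds two goods, one of them is better than `b`; valuing exactly the goods
  better than `b` at `1`, agent `i` has value `0` and still values that bundle minus one good
  at `1`.
* Otherwise all other bundles are singletons, so `X i` holds at least `m - n + 1` goods, and under
  unit values any other agent has value `1` against `m - n` for `X i` minus a good.
-/

open Finset

variable {ι G : Type*}

def IsEFX [DecidableEq G] (α : ℝ) (v : ι → G → ℝ) (X : ι → Finset G) : Prop :=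
  ∀ i j, X j ≠ ∅ → ∀ g ∈ X j, α * ((X j).erase g).sum (v i) ≤ (X i).sum (v i)

def IsAllocation (X : ι → Finset G) : Prop :=
  Pairwise (fun i j => Disjoint (X i) (X j)) ∧ ∀ g, ∃ i, g ∈ X i

section EFX

variable [DecidableEq G] {α : ℝ} {v : ι → G → ℝ} {X : ι → Finset G}

theorem not_isEFX_of_lt {i j : ι} {g : G} (hg : g ∈ X j)
    (h : (X i).sum (v i) < α * ((X j).erase g).sum (v i)) : ¬ IsEFX α v X :=
  fun hX => (hX i j (ne_empty_of_mem hg) g hg).not_gt h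

theorem not_isEFX_one_of_card_lt {i j : ι} (hj : (X j).Nonempty)
    (h : ((X i).card : ℝ) < α * (((X j).card : ℝ) - 1)) : ¬ IsEFX α (fun _ _ => 1) X := by
  obtain ⟨g, hg⟩ := hj
  refine not_isEFX_of_lt (i := i) hg ?_
  have hcard : (((X j).erase g).card : ℝ) = (X j).card - 1 := by
    rw [cast_card_erase_of_mem hg]
  simpa [hcard] using h

end EFX

theorem not_isEFX_indicator [LinearOrder G] {X : ι → Finset G} {α : ℝ} (hα : 0 < α)
    {i j : ι} {b a : G} (hi : ∀ g ∈ X i, b ≤ g) (ha : a ∈ X j) (hab : a < b)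
    (hj : 1 < (X j).card) :
    ¬ IsEFX α (fun _ g => if g < b then 1 else 0) X := by
  obtain ⟨g, hg, hga⟩ := exists_mem_ne hj a
  refine not_isEFX_of_lt (i := i) hg ?_
  have hown : (X i).sum (fun g => if g < b then (1 : ℝ) else 0) = 0 :=
    sum_eq_zero fun g hg => if_neg (hi g hg).not_gt
  have hother : 1 ≤ ((X j).erase g).sum (fun g => if g < b then (1 : ℝ) else 0) := by
    have := single_le_sum (f := fun g => if g < b then (1 : ℝ) else 0)
      (fun _ _ => by positivity) (mem_erase.mpr ⟨hga.symm, ha⟩)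
    simpa [hab] using this
  rw [hown]
  nlinarith

namespace IsAllocation

variable [Fintype ι] {X : ι → Finset G}

theorem sum_card [Fintype G] (hX : IsAllocation X) : ∑ i, (X i).card = Fintype.card G := by
  classical
  have hcover : univ.biUnion X = univ :=
    eq_univ_of_forall fun g => mem_biUnion.mpr <| (hX.2 g).imp fun i hi => ⟨mem_univ i, hi⟩
  rw [← card_biUnion fun i _ j _ hij => hX.1 hij, hcover, card_univ]

theorem exists_one_lt_card [Fintype G] (hX : IsAllocation X)
    (h : Fintype.card ι < Fintype.card G) :
    ∃ j, 1 < (X j).card := by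
  have : ∑ _j : ι, 1 < ∑ j, (X j).card := by simpa [hX.sum_card] using h
  simpa using exists_lt_of_sum_lt this

theorem card_add_le [Fintype G] (hX : IsAllocation X) {i : ι}
    (hsmall : ∀ j ≠ i, (X j).card ≤ 1) :
    Fintype.card G + 1 ≤ (X i).card + Fintype.card ι := by
  classical
  have hrest : ∑ j ∈ univ.erase i, (X j).card ≤ Fintype.card ι - 1 := by
    simpa using sum_le_card_nsmul (univ.erase i) _ 1 fun j hj => hsmall j (ne_of_mem_erase hj)
  have := Fintype.card_pos_iff.mpr ⟨i⟩
  rw [← hX.sum_card, ← sum_erase_add _ _ (mem_univ i)]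
  omega

theorem exists_worst_best [LinearOrder G] [Nonempty ι] (hX : IsAllocation X)
    (hne : ∀ k, (X k).Nonempty) :
    ∃ i, ∃ b ∈ X i, (∀ g ∈ X i, b ≤ g) ∧ ∀ j ≠ i, ∃ a ∈ X j, a < b := by
  obtain ⟨i, -, hmax⟩ := exists_max_image univ (fun k => (X k).min' (hne k)) univ_nonempty
  refine ⟨i, (X i).min' (hne i), min'_mem _ _, fun g hg => min'_le _ _ hg,
    fun j hji => ⟨(X j).min' (hne j), min'_mem _ _, ?_⟩⟩
  refine (hmax j (mem_univ j)).lt_of_ne fun heq => ?_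
  exact disjoint_left.mp (hX.1 hji) (min'_mem (X j) _) (heq ▸ min'_mem (X i) _)

theorem not_isEFX_one_of_forall_card_le_one [Fintype G] [DecidableEq G] [Nontrivial ι]
    (hX : IsAllocation X) {i : ι} (hi : (X i).Nonempty) (hsmall : ∀ j ≠ i, (X j).card ≤ 1)
    {α : ℝ} (hα₀ : 0 < α) (hα : 1 < α * ((Fintype.card G : ℝ) - Fintype.card ι)) :
    ¬ IsEFX α (fun _ _ => 1) X := by
  obtain ⟨j, hji⟩ := exists_ne i
  refine not_isEFX_one_of_card_lt (i := j) hi ?_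
  have hcard : ((Fintype.card G + 1 : ℕ) : ℝ) ≤ ((X i).card + Fintype.card ι : ℕ) := by
    exact_mod_cast hX.card_add_le hsmall
  have hXj : ((X j).card : ℝ) ≤ 1 := by exact_mod_cast hsmall j hji
  push_cast at hcard
  nlinarith

theorem exists_antitone_not_isEFX [Fintype G] [LinearOrder G] [Nontrivial ι]
    (hX : IsAllocation X) (hcard : Fintype.card ι < Fintype.card G) :
    ∃ v : G → ℝ, (∀ g, 0 ≤ v g) ∧ Antitone v ∧
      ∀ α : ℝ, 1 / ((Fintype.card G : ℝ) - Fintype.card ι) < α →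
        ¬ IsEFX α (fun _ => v) X := by
  have hgap : (0 : ℝ) < (Fintype.card G : ℝ) - Fintype.card ι := by
    simpa using (Nat.cast_lt (α := ℝ)).mpr hcard
  by_cases hemp : ∃ i, X i = ∅
  · obtain ⟨i, hi⟩ := hemp
    obtain ⟨j, hj⟩ := hX.exists_one_lt_card hcard
    refine ⟨fun _ => 1, fun _ => zero_le_one, antitone_const, fun α hα => ?_⟩
    have hα : 0 < α := (one_div_pos.mpr hgap).trans hα
    refine not_isEFX_one_of_card_lt (i := i) (j := j) (card_pos.mp (by omega)) ?_
    have : (1 : ℝ) < (X j).card := by exact_mod_cast hj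
    rw [hi, card_empty, Nat.cast_zero]
    nlinarith
  push Not at hemp
  obtain ⟨i, b, -, hib, hbest⟩ := hX.exists_worst_best hemp
  by_cases hpair : ∃ j ≠ i, 1 < (X j).card
  · obtain ⟨j, hji, hj⟩ := hpair
    obtain ⟨a, ha, hab⟩ := hbest j hji
    refine ⟨fun g => if g < b then 1 else 0, fun g => by positivity, fun g g' hgg' => ?_,
      fun α hα => not_isEFX_indicator ((one_div_pos.mpr hgap).trans hα) hib ha hab hj⟩
    by_cases hg' : g' < b
    · simp [hg', hgg'.trans_lt hg']
    · simp only [hg', if_false]; positivity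
  push Not at hpair
  exact ⟨fun _ => 1, fun _ => zero_le_one, antitone_const,
    fun α hα => hX.not_isEFX_one_of_forall_card_le_one (hemp i) hpair
      ((one_div_pos.mpr hgap).trans hα) ((div_lt_iff₀ hgap).mp hα)⟩

end IsAllocation

/-- For `m > n + 2`, no ordinal algorithm (a function from profiles of
strict total orders on the goods to allocations) can always compute an `α`-EFX allocation
for any `α > 1/(m-n)`: there is a profile of rankings and a consistent profile of
nonnegative additive valuations for which the output allocation is not `α`-EFX for any
`α > 1/(m-n)`. -/
theorem stmt_2 (n m : ℕ) (hn : 2 ≤ n) (hm : n + 2 < m)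
    (A : (Fin n → Fin m → Fin m → Prop) → (Fin n → Finset (Fin m)))
    (hA : ∀ pref : Fin n → Fin m → Fin m → Prop,
      (∀ i, IsStrictTotalOrder (Fin m) (pref i)) →
      (∀ i j : Fin n, i ≠ j → Disjoint (A pref i) (A pref j)) ∧
      (∀ g : Fin m, ∃ i : Fin n, g ∈ A pref i)) :
    ∃ (pref : Fin n → Fin m → Fin m → Prop) (v : Fin n → Fin m → ℝ),
      (∀ i, IsStrictTotalOrder (Fin m) (pref i)) ∧
      (∀ i g, 0 ≤ v i g) ∧
      (∀ i : Fin n, ∀ g g' : Fin m, pref i g g' → v i g' ≤ v i g) ∧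
      (∀ α : ℝ, 1 / ((m : ℝ) - (n : ℝ)) < α →
        ¬ (∀ i j : Fin n, A pref j ≠ ∅ → ∀ g ∈ A pref j,
            α * ((A pref j).erase g).sum (v i) ≤ (A pref i).sum (v i))) := by
  have : Nontrivial (Fin n) := Fin.nontrivial_iff_two_le.mpr hn
  have hstrict : ∀ _ : Fin n, IsStrictTotalOrder (Fin m) (· < ·) := fun _ => inferInstance
  have hX : IsAllocation (A fun _ => (· < ·)) := hA _ hstrict
  obtain ⟨v, hv_nonneg, hv_anti, hv⟩ :=
    hX.exists_antitone_not_isEFX (by simp only [Fintype.card_fin]; omega)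
  refine ⟨_, fun _ => v, hstrict, fun _ => hv_nonneg, fun _ g g' h => hv_anti h.le, ?_⟩
  intro α hα
  exact hv α (by simpa only [Fintype.card_fin] using hα)
end

section
/- Let n ≥ 2, m ≥ n, k ≥ 1 an integer, and ρ ∈ (0,1]. For each agent i, let T_i ⊆ G with |T_i| = n−1 be a set of top goods of agent i (i.e., v_i(g) ≥ v_i(g') for every g ∈ T_i and g' ∉ T_i), and let t_i = min_{g ∈ T_i} v_i(g). Suppose that for each agent i a nonnegative function ṽ_i : G → ℝ satisfies: (i) ṽ_i(g) ≤ v_i(g) for every g ∈ G; (ii) ṽ_i(g) = v_i(g) for every g ∈ T_i; (iii) for every g ∈ G, if ṽ_i(g) > 0 then v_i(g) ≤ m^{1/(k+1)} · ṽ_i(g); and (iv) for every g ∈ G, if ṽ_i(g) = 0 then v_i(g) ≤ t_i · m^{−k/(k+1)}. If an allocation X is ρ-EFX with respect to the additive valuations (ṽ_1,…,ṽ_n), then X is (ρ/(2·m^{1/(k+1)}))-EFX with respect to (v_1,…,v_n). -/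
/-!
Write `β = m^(1/(k+1))`. Conditions (iii) and (iv) give `v_i(g) ≤ β ṽ_i(g) + t_i m^(-k/(k+1))`
for every good, and summing over at most `m` goods yields `v_i(S) ≤ β (ṽ_i(S) + t_i)`. If
`ṽ_i(X_i) ≥ ρ t_i`, this bound for `S = X_j \ {g}` together with `ρ`-EFX for `ṽ` gives the claim.
Otherwise every top good `g'` of agent `i` has `ρ ṽ_i(g') ≥ ρ t_i > ṽ_i(X_i)`: it is not in `X_i`,
and `ρ`-EFX forces a bundle containing it to be the singleton `{g'}`. These `n - 1` singletons are
then the bundles of all the other agents, so `X_j \ {g}` is empty.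
-/

open Finset

lemma Real.mul_rpow_neg_div_add_one {x : ℝ} (hx : 0 < x) {k : ℝ} (hk : k + 1 ≠ 0) :
    x * x ^ (-k / (k + 1)) = x ^ (1 / (k + 1)) := by
  rw [mul_comm, ← Real.rpow_add_one hx.ne']
  congr 1
  field_simp
  ring

lemma le_mul_add_of_pos_or_eq_zero {a b β c : ℝ} (hb : 0 ≤ b) (hc : 0 ≤ c)
    (hpos : 0 < b → a ≤ β * b) (hzero : b = 0 → a ≤ c) : a ≤ β * b + c := by
  rcases hb.lt_or_eq with hb | hb
  · linarith [hpos hb]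
  · subst hb
    simpa using hzero rfl

section Allocation

variable {α ι : Type*}

lemma mul_sum_erase_le_sum [DecidableEq α] {v : α → ℝ} {c : ℝ} (hc : c ≤ 1)
    (hv : ∀ g, 0 ≤ v g) (A : Finset α) (g : α) :
    c * ∑ h ∈ A.erase g, v h ≤ ∑ h ∈ A, v h :=
  (mul_le_of_le_one_left (sum_nonneg fun h _ => hv h) hc).trans
    (sum_le_sum_of_subset_of_nonneg (erase_subset g A) fun h _ _ => hv h)

lemma sum_le_mul_add_of_le_mul_add [Fintype α] {v vt : α → ℝ} {β μ t : ℝ} (S : Finset α)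
    (htμ : 0 ≤ t * μ) (hβμ : Fintype.card α * μ = β) (happrox : ∀ g, v g ≤ β * vt g + t * μ) :
    ∑ g ∈ S, v g ≤ β * (∑ g ∈ S, vt g + t) :=
  calc ∑ g ∈ S, v g ≤ ∑ g ∈ S, (β * vt g + t * μ) := sum_le_sum fun g _ => happrox g
    _ = β * ∑ g ∈ S, vt g + #S * (t * μ) := by
      rw [sum_add_distrib, mul_sum, sum_const, nsmul_eq_mul]
    _ ≤ β * ∑ g ∈ S, vt g + Fintype.card α * (t * μ) := by
      gcongr
      exact card_le_univ S
    _ = β * (∑ g ∈ S, vt g + t) := by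
      rw [← hβμ]
      ring

lemma div_two_mul_sum_le_of_le_mul_add [Fintype α] {v vt : α → ℝ} {β μ t ρ : ℝ}
    {A S : Finset α} (hβ : 0 < β) (hρ : 0 ≤ ρ) (htμ : 0 ≤ t * μ)
    (hβμ : Fintype.card α * μ = β) (happrox : ∀ g, v g ≤ β * vt g + t * μ)
    (hA : ∑ g ∈ A, vt g ≤ ∑ g ∈ A, v g) (hEFX : ρ * ∑ g ∈ S, vt g ≤ ∑ g ∈ A, vt g)
    (htA : ρ * t ≤ ∑ g ∈ A, vt g) :
    ρ / (2 * β) * ∑ g ∈ S, v g ≤ ∑ g ∈ A, v g := by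
  rw [div_mul_eq_mul_div, div_le_iff₀ (by positivity)]
  calc ρ * ∑ g ∈ S, v g ≤ ρ * (β * (∑ g ∈ S, vt g + t)) := by
        gcongr
        exact sum_le_mul_add_of_le_mul_add S htμ hβμ happrox
    _ = β * (ρ * ∑ g ∈ S, vt g + ρ * t) := by ring
    _ ≤ β * (∑ g ∈ A, v g + ∑ g ∈ A, v g) := by gcongr <;> linarith
    _ = (∑ g ∈ A, v g) * (2 * β) := by ring

lemma eq_singleton_of_lt_mul {vt : α → ℝ} {ρ a : ℝ} [DecidableEq α] {B : Finset α} {g : α}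
    (hg : g ∈ B) (hEFX : ∀ h ∈ B, ρ * ∑ x ∈ B.erase h, vt x ≤ a) (hlt : a < ρ * vt g)
    (hρ : 0 ≤ ρ) (hvt : ∀ x, 0 ≤ vt x) : B = {g} := by
  refine eq_singleton_iff_unique_mem.2 ⟨hg, fun h hh => ?_⟩
  by_contra hhg
  have hg_erase : g ∈ B.erase h := mem_erase.2 ⟨Ne.symm hhg, hg⟩
  have := mul_le_mul_of_nonneg_left (single_le_sum (fun x _ => hvt x) hg_erase) hρ
  linarith [hEFX h hh]

lemma exists_eq_singleton_of_sum_lt_mul [Fintype ι] [DecidableEq ι] [DecidableEq α]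
    {vt : α → ℝ} {ρ t : ℝ} {X : ι → Finset α} {T : Finset α} {i j : ι}
    (hρ0 : 0 ≤ ρ) (hρ1 : ρ ≤ 1) (hvt : ∀ g, 0 ≤ vt g) (hcover : ∀ g, ∃ l, g ∈ X l)
    (hT : #T = Fintype.card ι - 1) (hTt : ∀ g ∈ T, t ≤ vt g)
    (hEFX : ∀ l, ∀ g ∈ X l, ρ * ∑ h ∈ (X l).erase g, vt h ≤ ∑ h ∈ X i, vt h)
    (hlt : ∑ h ∈ X i, vt h < ρ * t) (hji : j ≠ i) : ∃ g, X j = {g} := by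
  choose owner howner using hcover
  have hsingle : ∀ g ∈ T, X (owner g) = {g} := fun g hg =>
    eq_singleton_of_lt_mul (howner g) (hEFX _)
      (hlt.trans_le (mul_le_mul_of_nonneg_left (hTt g hg) hρ0)) hρ0 hvt
  have ht : 0 < t := pos_of_mul_pos_right ((sum_nonneg fun h _ => hvt h).trans_lt hlt) hρ0
  have howner_ne : ∀ g ∈ T, owner g ≠ i := by
    intro g hg hgi
    have := single_le_sum (fun h _ => hvt h) (hgi ▸ howner g)
    linarith [hTt g hg, mul_le_of_le_one_left ht.le hρ1]
  have hmaps : Set.MapsTo owner T (univ.erase i : Finset ι) := fun g hg =>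
    mem_erase.2 ⟨howner_ne g hg, mem_univ _⟩
  have hinj : Set.InjOn owner T := fun a ha b hb hab =>
    singleton_injective ((hsingle a ha).symm.trans (hab ▸ hsingle b hb))
  obtain ⟨g, hg, rfl⟩ := surjOn_of_injOn_of_card_le owner hmaps hinj
    (by rw [card_erase_of_mem (mem_univ i), card_univ, hT]) (mem_erase.2 ⟨hji, mem_univ j⟩)
  exact ⟨g, hsingle g hg⟩

end Allocation

theorem stmt_3_general (n m k : ℕ)
    (ρ : ℝ) (hρ0 : 0 < ρ) (hρ1 : ρ ≤ 1)
    (v vt : Fin n → Fin m → ℝ)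
    (hv : ∀ i g, 0 ≤ v i g) (hvt : ∀ i g, 0 ≤ vt i g)
    (T : Fin n → Finset (Fin m))
    (hTcard : ∀ i, (T i).card = n - 1)
    (t : Fin n → ℝ)
    (htmem : ∀ i, ∃ g ∈ T i, v i g = t i)
    (htmin : ∀ i : Fin n, ∀ g ∈ T i, t i ≤ v i g)
    (h1 : ∀ i g, vt i g ≤ v i g)
    (h2 : ∀ i : Fin n, ∀ g ∈ T i, vt i g = v i g)
    (h3 : ∀ i g, 0 < vt i g → v i g ≤ (m : ℝ) ^ ((1 : ℝ) / ((k : ℝ) + 1)) * vt i g)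
    (h4 : ∀ i g, vt i g = 0 → v i g ≤ t i * (m : ℝ) ^ (-(k : ℝ) / ((k : ℝ) + 1)))
    (X : Fin n → Finset (Fin m))
    (hcover : ∀ g : Fin m, ∃ i : Fin n, g ∈ X i)
    (hEFX : ∀ i j : Fin n, X j ≠ ∅ → ∀ g ∈ X j,
      ρ * ((X j).erase g).sum (vt i) ≤ (X i).sum (vt i)) :
    ∀ i j : Fin n, X j ≠ ∅ → ∀ g ∈ X j,
      (ρ / (2 * (m : ℝ) ^ ((1 : ℝ) / ((k : ℝ) + 1)))) * ((X j).erase g).sum (v i)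
        ≤ (X i).sum (v i) := by
  intro i j hj g hg
  have hm : (1 : ℝ) ≤ m := by exact_mod_cast g.pos
  have hβ : 1 ≤ (m : ℝ) ^ ((1 : ℝ) / ((k : ℝ) + 1)) := Real.one_le_rpow hm (by positivity)
  by_cases hji : j = i
  · subst hji
    exact mul_sum_erase_le_sum ((div_le_one (by positivity)).2 (by linarith)) (hv j) _ _
  obtain ⟨g₀, -, hg₀⟩ := htmem i
  have htμ : 0 ≤ t i * (m : ℝ) ^ (-(k : ℝ) / ((k : ℝ) + 1)) :=
    mul_nonneg (hg₀ ▸ hv i g₀) (by positivity)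
  by_cases hA : ρ * t i ≤ (X i).sum (vt i)
  · exact div_two_mul_sum_le_of_le_mul_add (by positivity) hρ0.le htμ
      (by simpa using Real.mul_rpow_neg_div_add_one (zero_lt_one.trans_le hm) (by positivity))
      (fun h => le_mul_add_of_pos_or_eq_zero (hvt i h) htμ (h3 i h) (h4 i h))
      (sum_le_sum fun h _ => h1 i h) (hEFX i j hj g hg) hA
  · obtain ⟨g', hXj⟩ := exists_eq_singleton_of_sum_lt_mul hρ0.le hρ1 (hvt i) hcover
      (by simpa using hTcard i) (fun g hg => h2 i g hg ▸ htmin i g hg)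
      (fun l g hg => hEFX i l (ne_empty_of_mem hg) g hg) (not_le.1 hA) hji
    rw [hXj, mem_singleton] at hg
    simp [hXj, hg, sum_nonneg fun h _ => hv i h]

/-- If virtual valuations `vt` satisfy the four stated approximation
conditions relative to the true valuations `v` (with top sets `T i` of size `n-1` and
`t i` the minimum top value), then any allocation that is `ρ`-EFX with respect to `vt`
is `(ρ/(2·m^(1/(k+1))))`-EFX with respect to `v`. -/
theorem stmt_3 (n m k : ℕ) (hn : 2 ≤ n) (hm : n ≤ m) (hk : 1 ≤ k)
    (ρ : ℝ) (hρ0 : 0 < ρ) (hρ1 : ρ ≤ 1)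
    (v vt : Fin n → Fin m → ℝ)
    (hv : ∀ i g, 0 ≤ v i g) (hvt : ∀ i g, 0 ≤ vt i g)
    (T : Fin n → Finset (Fin m))
    (hTcard : ∀ i, (T i).card = n - 1)
    (hTtop : ∀ i : Fin n, ∀ g ∈ T i, ∀ g' ∉ T i, v i g' ≤ v i g)
    (t : Fin n → ℝ)
    (htmem : ∀ i, ∃ g ∈ T i, v i g = t i)
    (htmin : ∀ i : Fin n, ∀ g ∈ T i, t i ≤ v i g)
    (h1 : ∀ i g, vt i g ≤ v i g)
    (h2 : ∀ i : Fin n, ∀ g ∈ T i, vt i g = v i g)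
    (h3 : ∀ i g, 0 < vt i g → v i g ≤ (m : ℝ) ^ ((1 : ℝ) / ((k : ℝ) + 1)) * vt i g)
    (h4 : ∀ i g, vt i g = 0 → v i g ≤ t i * (m : ℝ) ^ (-(k : ℝ) / ((k : ℝ) + 1)))
    (X : Fin n → Finset (Fin m))
    (hdisj : ∀ i j : Fin n, i ≠ j → Disjoint (X i) (X j))
    (hcover : ∀ g : Fin m, ∃ i : Fin n, g ∈ X i)
    (hEFX : ∀ i j : Fin n, X j ≠ ∅ → ∀ g ∈ X j,
      ρ * ((X j).erase g).sum (vt i) ≤ (X i).sum (vt i)) :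
    ∀ i j : Fin n, X j ≠ ∅ → ∀ g ∈ X j,
      (ρ / (2 * (m : ℝ) ^ ((1 : ℝ) / ((k : ℝ) + 1)))) * ((X j).erase g).sum (v i)
        ≤ (X i).sum (v i) :=
  stmt_3_general n m k ρ hρ0 hρ1 v vt hv hvt T hTcard t htmem htmin h1 h2 h3 h4 X hcover hEFX
end

section
/- Let n ≥ 2, k ≥ 2 an integer, and m ≥ 1. Suppose the set G of m goods is partitioned into sets T, S_1,…,S_{k−1}, B with |T| = n−1, |S_ℓ| ≥ m^{(2ℓ−1)/(2k−1)} for every ℓ ∈ {1,…,k−1}, and B ≠ ∅. Fix a good g' ∈ T and let w : G → ℝ be given by w(g) = √k for g ∈ T \ {g'}, w(g') = m^{−2/(2k−1)}, w(g) = m^{−2ℓ/(2k−1)} for g ∈ S_ℓ, and w(g) = 0 for g ∈ B. Let X be the allocation in which agent n−1 receives only the good g' (X_{n−1} = {g'}) and agent n receives all goods in G \ T. Then w(X_{n−1}) = m^{−2/(2k−1)} and w(X_n \ {g}) ≥ (k−1) · m^{−1/(2k−1)} for every g ∈ B; consequently, for any valuation profile in which agent n−1 has the additive valuation w, the allocation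 X is not α-EFX for any α > m^{−1/(2k−1)}/(k−1). -/
/-- In the lower-bound instance (goods partitioned into
`T, S_1, …, S_{k-1}, B`, `|T| = n-1`, `|S_ℓ| ≥ m^((2ℓ-1)/(2k-1))`, `B ≠ ∅`) with the
valuation `w` that lowers the value of the fixed good `g' ∈ T` to `m^(-2/(2k-1))`: if
agent `n-1` gets only `g'` and agent `n` gets all goods outside `T`, then
`w(X_{n-1}) = m^(-2/(2k-1))`, `w(X_n \ {g}) ≥ (k-1)·m^(-1/(2k-1))` for every `g ∈ B`,
and for every valuation profile where agent `n-1` has valuation `w` the allocation is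
not `α`-EFX for any `α > m^(-1/(2k-1))/(k-1)`. -/
theorem stmt_7 (n k m : ℕ) (hn : 2 ≤ n) (hk : 2 ≤ k) (hm : 1 ≤ m)
    (T B : Finset (Fin m)) (S : ℕ → Finset (Fin m))
    (hTcard : T.card = n - 1)
    (hScard : ∀ ℓ : ℕ, 1 ≤ ℓ → ℓ ≤ k - 1 →
      (m : ℝ) ^ ((2 * (ℓ : ℝ) - 1) / (2 * (k : ℝ) - 1)) ≤ ((S ℓ).card : ℝ))
    (hB : B ≠ ∅)
    (hcoverG : ∀ g : Fin m, g ∈ T ∨ g ∈ B ∨ ∃ ℓ : ℕ, 1 ≤ ℓ ∧ ℓ ≤ k - 1 ∧ g ∈ S ℓ)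
    (hTB : Disjoint T B)
    (hTS : ∀ ℓ : ℕ, 1 ≤ ℓ → ℓ ≤ k - 1 → Disjoint T (S ℓ))
    (hBS : ∀ ℓ : ℕ, 1 ≤ ℓ → ℓ ≤ k - 1 → Disjoint B (S ℓ))
    (hSS : ∀ ℓ ℓ' : ℕ, 1 ≤ ℓ → ℓ ≤ k - 1 → 1 ≤ ℓ' → ℓ' ≤ k - 1 → ℓ ≠ ℓ' →
      Disjoint (S ℓ) (S ℓ'))
    (g' : Fin m) (hg' : g' ∈ T)
    (w : Fin m → ℝ)
    (hwT : ∀ g ∈ T, g ≠ g' → w g = Real.sqrt k)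
    (hwg' : w g' = (m : ℝ) ^ (-(2 : ℝ) / (2 * (k : ℝ) - 1)))
    (hwS : ∀ ℓ : ℕ, 1 ≤ ℓ → ℓ ≤ k - 1 → ∀ g ∈ S ℓ,
      w g = (m : ℝ) ^ (-(2 * (ℓ : ℝ)) / (2 * (k : ℝ) - 1)))
    (hwB : ∀ g ∈ B, w g = 0)
    (X : Fin n → Finset (Fin m))
    (hdisj : ∀ i j : Fin n, i ≠ j → Disjoint (X i) (X j))
    (hcover : ∀ g : Fin m, ∃ i : Fin n, g ∈ X i)
    (hXn1 : X ⟨n - 2, by omega⟩ = {g'})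
    (hXn : X ⟨n - 1, by omega⟩ = Finset.univ \ T) :
    (X ⟨n - 2, by omega⟩).sum w = (m : ℝ) ^ (-(2 : ℝ) / (2 * (k : ℝ) - 1)) ∧
    (∀ g ∈ B, ((k : ℝ) - 1) * (m : ℝ) ^ (-(1 : ℝ) / (2 * (k : ℝ) - 1)) ≤
      ((X ⟨n - 1, by omega⟩).erase g).sum w) ∧
    (∀ v : Fin n → Fin m → ℝ, (∀ i g, 0 ≤ v i g) → v ⟨n - 2, by omega⟩ = w →
      ∀ α : ℝ, (m : ℝ) ^ (-(1 : ℝ) / (2 * (k : ℝ) - 1)) / ((k : ℝ) - 1) < α →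
        ¬ (∀ i j : Fin n, X j ≠ ∅ → ∀ g ∈ X j,
            α * ((X j).erase g).sum (v i) ≤ (X i).sum (v i))) := by
  have hm0 : (0 : ℝ) < m := by exact_mod_cast hm
  have hk2 : (2 : ℝ) ≤ k := by exact_mod_cast hk
  have hden : (0 : ℝ) < 2 * (k : ℝ) - 1 := by linarith
  -- Part 1
  have part1 : (X ⟨n - 2, by omega⟩).sum w = (m : ℝ) ^ (-(2 : ℝ) / (2 * (k : ℝ) - 1)) := by
    rw [hXn1, Finset.sum_singleton, hwg']
  -- Part 2
  have part2 : ∀ g ∈ B, ((k : ℝ) - 1) * (m : ℝ) ^ (-(1 : ℝ) / (2 * (k : ℝ) - 1)) ≤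
      ((X ⟨n - 1, by omega⟩).erase g).sum w := by
    intro g hg
    rw [hXn]
    set U := (Finset.Icc 1 (k - 1)).biUnion S with hU
    have hUsub : U ⊆ (Finset.univ \ T).erase g := by
      intro x hx
      rw [hU, Finset.mem_biUnion] at hx
      obtain ⟨ℓ, hℓ, hxS⟩ := hx
      rw [Finset.mem_Icc] at hℓ
      refine Finset.mem_erase.mpr ⟨?_, ?_⟩
      · rintro rfl
        exact Finset.disjoint_left.mp (hBS ℓ hℓ.1 hℓ.2) hg hxS
      · simp only [Finset.mem_sdiff, Finset.mem_univ, true_and]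
        intro hxT
        exact Finset.disjoint_left.mp (hTS ℓ hℓ.1 hℓ.2) hxT hxS
    have hnonneg : ∀ x ∈ (Finset.univ \ T).erase g, x ∉ U → 0 ≤ w x := by
      intro x hx _
      rcases hcoverG x with hxT | hxB | ⟨ℓ, h1, h2, hxS⟩
      · exfalso
        have := Finset.mem_erase.mp hx
        simp [Finset.mem_sdiff, hxT] at this
      · simp [hwB x hxB]
      · rw [hwS ℓ h1 h2 x hxS]
        positivity
    refine le_trans ?_ (Finset.sum_le_sum_of_subset_of_nonneg hUsub hnonneg)
    have hpd : (↑(Finset.Icc 1 (k - 1)) : Set ℕ).PairwiseDisjoint S := by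
      intro a ha b hb hab
      simp only [Finset.coe_Icc, Set.mem_Icc] at ha hb
      exact hSS a b ha.1 ha.2 hb.1 hb.2 hab
    rw [hU, Finset.sum_biUnion hpd]
    have hterm : ∀ ℓ ∈ Finset.Icc 1 (k - 1),
        (m : ℝ) ^ (-(1 : ℝ) / (2 * (k : ℝ) - 1)) ≤ (S ℓ).sum w := by
      intro ℓ hℓ
      rw [Finset.mem_Icc] at hℓ
      have hsum : (S ℓ).sum w = ((S ℓ).card : ℝ) *
          (m : ℝ) ^ (-(2 * (ℓ : ℝ)) / (2 * (k : ℝ) - 1)) := by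
        rw [Finset.sum_congr rfl (fun x hx => hwS ℓ hℓ.1 hℓ.2 x hx),
          Finset.sum_const, nsmul_eq_mul]
      rw [hsum]
      calc (m : ℝ) ^ (-(1 : ℝ) / (2 * (k : ℝ) - 1))
          = (m : ℝ) ^ ((2 * (ℓ : ℝ) - 1) / (2 * (k : ℝ) - 1)) *
            (m : ℝ) ^ (-(2 * (ℓ : ℝ)) / (2 * (k : ℝ) - 1)) := by
            rw [← Real.rpow_add hm0]
            congr 1
            field_simp
            ring
        _ ≤ ((S ℓ).card : ℝ) * (m : ℝ) ^ (-(2 * (ℓ : ℝ)) / (2 * (k : ℝ) - 1)) := by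
            apply mul_le_mul_of_nonneg_right (hScard ℓ hℓ.1 hℓ.2)
            positivity
    calc ((k : ℝ) - 1) * (m : ℝ) ^ (-(1 : ℝ) / (2 * (k : ℝ) - 1))
        = ((Finset.Icc 1 (k - 1)).card : ℝ) * (m : ℝ) ^ (-(1 : ℝ) / (2 * (k : ℝ) - 1)) := by
          rw [Nat.card_Icc]
          have : k - 1 + 1 - 1 = k - 1 := by omega
          rw [this]
          congr 1
          have : ((k - 1 : ℕ) : ℝ) = (k : ℝ) - 1 := by
            have : (1 : ℕ) ≤ k := by omega
            push_cast [Nat.cast_sub this]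
            ring
          rw [this]
      _ ≤ ∑ ℓ ∈ Finset.Icc 1 (k - 1), (S ℓ).sum w := by
          have := Finset.card_nsmul_le_sum (Finset.Icc 1 (k - 1))
            (fun ℓ => (S ℓ).sum w) _ hterm
          simpa [nsmul_eq_mul] using this
  refine ⟨part1, part2, ?_⟩
  -- Part 3
  intro v hv0 hvw α hα hEFX
  obtain ⟨g, hg⟩ := Finset.nonempty_iff_ne_empty.mpr hB
  have hgX : g ∈ X ⟨n - 1, by omega⟩ := by
    rw [hXn]
    simp only [Finset.mem_sdiff, Finset.mem_univ, true_and]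
    intro hgT
    exact Finset.disjoint_left.mp hTB hgT hg
  have hne : X ⟨n - 1, by omega⟩ ≠ ∅ := by
    intro h
    rw [h] at hgX
    exact absurd hgX (Finset.notMem_empty g)
  have h := hEFX ⟨n - 2, by omega⟩ ⟨n - 1, by omega⟩ hne g hgX
  rw [hvw, part1] at h
  have hbound := part2 g hg
  have hmpos : (0 : ℝ) < (m : ℝ) ^ (-(1 : ℝ) / (2 * (k : ℝ) - 1)) := by positivity
  have hk1 : (0 : ℝ) < (k : ℝ) - 1 := by linarith
  have hα0 : 0 < α := lt_trans (by positivity) hα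
  have key : (m : ℝ) ^ (-(2 : ℝ) / (2 * (k : ℝ) - 1)) < α * ((X ⟨n - 1, by omega⟩).erase g).sum w := by
    have hk1' : ((k : ℝ) - 1) ≠ 0 := ne_of_gt hk1
    have hmm : (m : ℝ) ^ (-(1 : ℝ) / (2 * (k : ℝ) - 1)) *
        (m : ℝ) ^ (-(1 : ℝ) / (2 * (k : ℝ) - 1)) = (m : ℝ) ^ (-(2 : ℝ) / (2 * (k : ℝ) - 1)) := by
      rw [← Real.rpow_add hm0]
      congr 1
      ring
    have h1 : (m : ℝ) ^ (-(2 : ℝ) / (2 * (k : ℝ) - 1)) =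
        ((m : ℝ) ^ (-(1 : ℝ) / (2 * (k : ℝ) - 1)) / ((k : ℝ) - 1)) *
        (((k : ℝ) - 1) * (m : ℝ) ^ (-(1 : ℝ) / (2 * (k : ℝ) - 1))) := by
      rw [← hmm]
      field_simp
    calc (m : ℝ) ^ (-(2 : ℝ) / (2 * (k : ℝ) - 1))
        = ((m : ℝ) ^ (-(1 : ℝ) / (2 * (k : ℝ) - 1)) / ((k : ℝ) - 1)) *
          (((k : ℝ) - 1) * (m : ℝ) ^ (-(1 : ℝ) / (2 * (k : ℝ) - 1))) := h1
      _ < α * (((k : ℝ) - 1) * (m : ℝ) ^ (-(1 : ℝ) / (2 * (k : ℝ) - 1))) := by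
          apply mul_lt_mul_of_pos_right hα
          positivity
      _ ≤ α * ((X ⟨n - 1, by omega⟩).erase g).sum w :=
          mul_le_mul_of_nonneg_left hbound (le_of_lt hα0)
  linarith
end

section
/- Let k ≥ 2 be an integer, m ≥ 1, and λ ≥ 1 a real number. Suppose a finite set G of at most m goods is partitioned into sets S_1,…,S_k with |S_ℓ| ≤ λ · m^{(2ℓ−1)/(2k−1)} for every ℓ ∈ {1,…,k−1}. Let v : G → ℝ be a nonnegative function and, for each ℓ, let v*_ℓ = max_{g ∈ S_ℓ} v(g) (with v*_ℓ = 0 when S_ℓ = ∅). If v*_1 ≥ √k · m^{2(ℓ−1)/(2k−1)} · v*_ℓ for every ℓ ∈ {2,…,k}, then Σ_{g ∈ G} v(g) ≤ (√k + 1) · λ · m^{1/(2k−1)} · v*_1. -/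
/-- If a set `G` of at most `m` goods is partitioned into `S_1, …, S_k` with
`|S_ℓ| ≤ λ·m^((2ℓ-1)/(2k-1))` for `ℓ ≤ k-1`, and the maximum values `v*_ℓ` on the parts
satisfy `v*_1 ≥ √k · m^(2(ℓ-1)/(2k-1)) · v*_ℓ` for `ℓ ∈ {2,…,k}`, then the total value of
`G` is at most `(√k + 1)·λ·m^(1/(2k-1))·v*_1`. -/
theorem stmt_8 {γ : Type*} [DecidableEq γ]
    (k m : ℕ) (hk : 2 ≤ k) (hm : 1 ≤ m) (lam : ℝ) (hlam : 1 ≤ lam)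
    (G : Finset γ) (hG : G.card ≤ m)
    (S : ℕ → Finset γ)
    (hsub : ∀ ℓ : ℕ, 1 ≤ ℓ → ℓ ≤ k → S ℓ ⊆ G)
    (hcover : ∀ g ∈ G, ∃ ℓ : ℕ, 1 ≤ ℓ ∧ ℓ ≤ k ∧ g ∈ S ℓ)
    (hSS : ∀ ℓ ℓ' : ℕ, 1 ≤ ℓ → ℓ ≤ k → 1 ≤ ℓ' → ℓ' ≤ k → ℓ ≠ ℓ' →
      Disjoint (S ℓ) (S ℓ'))
    (hScard : ∀ ℓ : ℕ, 1 ≤ ℓ → ℓ ≤ k - 1 →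
      ((S ℓ).card : ℝ) ≤ lam * (m : ℝ) ^ ((2 * (ℓ : ℝ) - 1) / (2 * (k : ℝ) - 1)))
    (v : γ → ℝ) (hv : ∀ g, 0 ≤ v g)
    (vstar : ℕ → ℝ)
    (hub : ∀ ℓ : ℕ, 1 ≤ ℓ → ℓ ≤ k → ∀ g ∈ S ℓ, v g ≤ vstar ℓ)
    (hmem : ∀ ℓ : ℕ, 1 ≤ ℓ → ℓ ≤ k → (S ℓ).Nonempty → ∃ g ∈ S ℓ, v g = vstar ℓ)
    (hempty : ∀ ℓ : ℕ, 1 ≤ ℓ → ℓ ≤ k → S ℓ = ∅ → vstar ℓ = 0)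
    (hcond : ∀ ℓ : ℕ, 2 ≤ ℓ → ℓ ≤ k →
      Real.sqrt k * (m : ℝ) ^ ((2 * ((ℓ : ℝ) - 1)) / (2 * (k : ℝ) - 1)) * vstar ℓ ≤ vstar 1) :
    G.sum v ≤ (Real.sqrt k + 1) * lam * (m : ℝ) ^ ((1 : ℝ) / (2 * (k : ℝ) - 1)) * vstar 1 := by

  have hk1 : (1:ℝ) ≤ (k:ℝ) := by exact_mod_cast le_trans one_le_two hk
  have hM : (0:ℝ) < (m:ℝ) := by exact_mod_cast hm
  have hsk : (0:ℝ) < Real.sqrt k := Real.sqrt_pos.2 (by positivity)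
  set D : ℝ := 2 * (k:ℝ) - 1 with hD
  have hDpos : 0 < D := by simp only [hD]; linarith
  have hvs : ∀ ℓ, 1 ≤ ℓ → ℓ ≤ k → 0 ≤ vstar ℓ := by
    intro ℓ h1 h2
    rcases (S ℓ).eq_empty_or_nonempty with he | hne
    · rw [hempty ℓ h1 h2 he]
    · obtain ⟨g, hg, hgeq⟩ := hmem ℓ h1 h2 hne
      rw [← hgeq]; exact hv g
  have hvs1 : 0 ≤ vstar 1 := hvs 1 le_rfl (by omega)
  have hGeq : G = (Finset.Icc 1 k).biUnion S := by
    ext g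
    simp only [Finset.mem_biUnion, Finset.mem_Icc]
    constructor
    · intro hg
      obtain ⟨ℓ, h1, h2, h3⟩ := hcover g hg
      exact ⟨ℓ, ⟨h1, h2⟩, h3⟩
    · rintro ⟨ℓ, ⟨h1, h2⟩, h3⟩
      exact hsub ℓ h1 h2 h3
  have hsum : G.sum v = ∑ ℓ ∈ Finset.Icc 1 k, (S ℓ).sum v := by
    rw [hGeq]
    apply Finset.sum_biUnion
    intro a ha b hb hab
    simp only [Finset.coe_Icc, Set.mem_Icc] at ha hb
    exact hSS a b ha.1 ha.2 hb.1 hb.2 hab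
  -- per-part bound by card * vstar
  have hpart : ∀ ℓ, 1 ≤ ℓ → ℓ ≤ k → (S ℓ).sum v ≤ ((S ℓ).card : ℝ) * vstar ℓ := by
    intro ℓ h1 h2
    have := Finset.sum_le_card_nsmul (S ℓ) v (vstar ℓ) (fun g hg => hub ℓ h1 h2 g hg)
    simpa [nsmul_eq_mul] using this
  -- key bound for ℓ ≥ 2
  have hkey : ∀ ℓ, 2 ≤ ℓ → ℓ ≤ k →
      ((S ℓ).card : ℝ) * vstar ℓ ≤ lam / Real.sqrt k * (m:ℝ) ^ ((1:ℝ)/D) * vstar 1 := by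
    intro ℓ h2 hℓk
    have hvsl : 0 ≤ vstar ℓ := hvs ℓ (by omega) hℓk
    have hc := hcond ℓ h2 hℓk
    have hlam0 : (0:ℝ) ≤ lam := le_trans zero_le_one hlam
    have hsplit : (m:ℝ) ^ ((2 * (ℓ:ℝ) - 1) / D)
        = (m:ℝ) ^ ((1:ℝ)/D) * (m:ℝ) ^ ((2 * ((ℓ:ℝ) - 1)) / D) := by
      rw [← Real.rpow_add hM]
      congr 1
      field_simp
      ring
    have hcardR : ((S ℓ).card : ℝ) ≤ lam * (m:ℝ) ^ ((2 * (ℓ:ℝ) - 1) / D) := by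
      rcases eq_or_lt_of_le hℓk with heq | hlt
      · have hc1 : ((S ℓ).card : ℝ) ≤ (m:ℝ) := by
          exact_mod_cast le_trans (Finset.card_le_card (hsub ℓ (by omega) hℓk)) hG
        have he1 : (2 * (ℓ:ℝ) - 1) / D = 1 := by
          rw [hD, heq, div_self]
          have : (1:ℝ) ≤ (k:ℝ) := hk1
          linarith
        rw [he1, Real.rpow_one]
        nlinarith
      · exact hScard ℓ (by omega) (by omega)
    have step1 : ((S ℓ).card : ℝ) * vstar ℓ
        ≤ lam * ((m:ℝ) ^ ((1:ℝ)/D) * (m:ℝ) ^ ((2 * ((ℓ:ℝ) - 1)) / D)) * vstar ℓ := by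
      rw [← hsplit]
      exact mul_le_mul_of_nonneg_right hcardR hvsl
    have h2' : lam * (m:ℝ) ^ ((1:ℝ)/D)
          * (Real.sqrt k * (m:ℝ) ^ ((2 * ((ℓ:ℝ) - 1)) / D) * vstar ℓ)
        ≤ lam * (m:ℝ) ^ ((1:ℝ)/D) * vstar 1 :=
      mul_le_mul_of_nonneg_left hc (by positivity)
    have hgoal : lam / Real.sqrt k * (m:ℝ) ^ ((1:ℝ)/D) * vstar 1
        = lam * (m:ℝ) ^ ((1:ℝ)/D) * vstar 1 / Real.sqrt k := by ring
    rw [hgoal, le_div_iff₀ hsk]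
    have t1 := mul_le_mul_of_nonneg_right step1 (Real.sqrt_nonneg (k:ℝ))
    nlinarith [t1, h2']
  -- split sum at ℓ = 1
  have hins : Finset.Icc 1 k = insert 1 (Finset.Icc 2 k) := by
    ext x; simp only [Finset.mem_Icc, Finset.mem_insert]; omega
  have h1notin : (1:ℕ) ∉ Finset.Icc 2 k := by simp
  have hsum2 : ∑ ℓ ∈ Finset.Icc 1 k, (S ℓ).sum v
      = (S 1).sum v + ∑ ℓ ∈ Finset.Icc 2 k, (S ℓ).sum v := by
    rw [hins, Finset.sum_insert h1notin]
  have htail : ∑ ℓ ∈ Finset.Icc 2 k, (S ℓ).sum v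
      ≤ ((k:ℝ) - 1) * (lam / Real.sqrt k * (m:ℝ) ^ ((1:ℝ)/D) * vstar 1) := by
    have hb : ∀ ℓ ∈ Finset.Icc 2 k, (S ℓ).sum v
        ≤ lam / Real.sqrt k * (m:ℝ) ^ ((1:ℝ)/D) * vstar 1 := by
      intro ℓ hℓ
      rw [Finset.mem_Icc] at hℓ
      exact le_trans (hpart ℓ (by omega) hℓ.2) (hkey ℓ hℓ.1 hℓ.2)
    have := Finset.sum_le_card_nsmul (Finset.Icc 2 k) (fun ℓ => (S ℓ).sum v)
      (lam / Real.sqrt k * (m:ℝ) ^ ((1:ℝ)/D) * vstar 1) hb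
    have hcard : ((Finset.Icc 2 k).card : ℝ) = (k:ℝ) - 1 := by
      rw [Nat.card_Icc]
      have : k + 1 - 2 = k - 1 := by omega
      rw [this]
      push_cast [Nat.cast_sub (by omega : 1 ≤ k)]
      ring
    rw [nsmul_eq_mul, hcard] at this
    exact this
  have hhead : (S 1).sum v ≤ lam * (m:ℝ) ^ ((1:ℝ)/D) * vstar 1 := by
    have hcard := hScard 1 le_rfl (by omega)
    have : (2 * ((1:ℕ):ℝ) - 1) / D = (1:ℝ)/D := by norm_num
    rw [this] at hcard
    calc (S 1).sum v ≤ ((S 1).card : ℝ) * vstar 1 := hpart 1 le_rfl (by omega)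
      _ ≤ lam * (m:ℝ) ^ ((1:ℝ)/D) * vstar 1 :=
          mul_le_mul_of_nonneg_right hcard hvs1
  -- combine
  have hfinal : lam * (m:ℝ) ^ ((1:ℝ)/D) * vstar 1
      + ((k:ℝ) - 1) * (lam / Real.sqrt k * (m:ℝ) ^ ((1:ℝ)/D) * vstar 1)
      ≤ (Real.sqrt k + 1) * lam * (m:ℝ) ^ ((1:ℝ)/D) * vstar 1 := by
    have hX : 0 ≤ lam * (m:ℝ) ^ ((1:ℝ)/D) * vstar 1 := by
      have hlam0 : 0 ≤ lam := le_trans zero_le_one hlam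
      positivity
    have hk1' : ((k:ℝ) - 1) / Real.sqrt k ≤ Real.sqrt k := by
      rw [div_le_iff₀ hsk]
      have := Real.mul_self_sqrt (show (0:ℝ) ≤ (k:ℝ) by positivity)
      linarith
    have heq : ((k:ℝ) - 1) * (lam / Real.sqrt k * (m:ℝ) ^ ((1:ℝ)/D) * vstar 1)
        = (((k:ℝ) - 1) / Real.sqrt k) * (lam * (m:ℝ) ^ ((1:ℝ)/D) * vstar 1) := by
      ring
    rw [heq]
    have := mul_le_mul_of_nonneg_right hk1' hX
    nlinarith [this, hX]
  calc G.sum v = (S 1).sum v + ∑ ℓ ∈ Finset.Icc 2 k, (S ℓ).sum v := by rw [hsum, hsum2]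
    _ ≤ lam * (m:ℝ) ^ ((1:ℝ)/D) * vstar 1
        + ((k:ℝ) - 1) * (lam / Real.sqrt k * (m:ℝ) ^ ((1:ℝ)/D) * vstar 1) := by
        exact add_le_add hhead htail
    _ ≤ (Real.sqrt k + 1) * lam * (m:ℝ) ^ ((1:ℝ)/D) * vstar 1 := hfinal
end

section
/- Let n ≥ 2 agents, m goods, and let k ≥ 1 be an integer and λ ≥ 1 a real number with λ · m^{1/(2k−1)} > n, such that α_ℓ := λ · m^{(2ℓ−1)/(2k−1)} is a positive integer for every ℓ ∈ {1,…,k−1} and Σ_{ℓ=1}^{k−1} α_ℓ ≤ m. Then every profile of nonnegative additive valuations (v_1,…,v_n) over the m goods admits an allocation that is α-EFX for α = min{ 1/((√k+1) · λ · m^{1/(2k−1)}), 1/(1 + √k · (n/λ) · m^{1/(2k−1)}) }. (This is the guarantee of the Partition-and-RoundRobin algorithm with parameters α_ℓ = λ·m^{(2ℓ−1)/(2k−1)} and β_ℓ = √k·m^{2ℓ/(2k−1)}.) -/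
open Finset

private lemma valnn {n m : ℕ} (v : Fin n → Fin m → ℝ) (hv : ∀ i g, 0 ≤ v i g)
    (i : Fin n) (S : Finset (Fin m)) : 0 ≤ S.sum (v i) :=
  Finset.sum_nonneg fun g _ => hv i g

/-- Bag filling: if every good is worth at most `s i` to each active agent and each active
agent values the pool at least `τ i + (t-1)(τ i + s i)`, then the pool can be fully split
among the `t` active agents so that each gets at least `τ i`. -/
private lemma bagfill {n m : ℕ} (v : Fin n → Fin m → ℝ) (hv : ∀ i g, 0 ≤ v i g)
    (τ s : Fin n → ℝ) (hτ : ∀ i, 0 ≤ τ i) (hs : ∀ i, 0 ≤ s i) :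
    ∀ t : ℕ, ∀ I : Finset (Fin n), I.Nonempty → I.card = t →
    ∀ R : Finset (Fin m),
    (∀ i ∈ I, ∀ g ∈ R, v i g ≤ s i) →
    (∀ i ∈ I, τ i + ((t : ℝ) - 1) * (τ i + s i) ≤ R.sum (v i)) →
    ∃ X : Fin n → Finset (Fin m),
      (∀ i, i ∉ I → X i = ∅) ∧
      (∀ i j, i ≠ j → Disjoint (X i) (X j)) ∧
      (∀ g ∈ R, ∃ i, g ∈ X i) ∧
      (∀ i, X i ⊆ R) ∧
      (∀ i ∈ I, τ i ≤ (X i).sum (v i)) := by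
  intro t
  induction t with
  | zero =>
    intro I hne hcard
    exact absurd hcard (by simpa using hne.card_pos.ne')
  | succ t ih =>
    intro I hne hcard R hsmall hbudget
    rcases Nat.eq_zero_or_pos t with ht0 | htpos
    · -- exactly one agent: give it everything
      subst ht0
      obtain ⟨i, hI⟩ := Finset.card_eq_one.mp hcard
      refine ⟨fun j => if j = i then R else ∅, ?_, ?_, ?_, ?_, ?_⟩
      · intro j hj
        have : j ≠ i := fun h => hj (by rw [hI]; exact Finset.mem_singleton.mpr h)
        simp [this]
      · intro a b hab
        by_cases ha : a = i <;> by_cases hb : b = i <;> simp_all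
      · intro g hg; exact ⟨i, by simp [hg]⟩
      · intro j; by_cases hj : j = i <;> simp [hj]
      · intro j hj
        have hji : j = i := by rw [hI] at hj; simpa using hj
        subst hji
        have hb := hbudget j (by rw [hI]; exact Finset.mem_singleton_self j)
        have h0 : ((0 + 1 : ℕ) : ℝ) - 1 = 0 := by norm_num
        rw [h0, zero_mul, add_zero] at hb
        simpa using hb
    · -- at least two agents: carve a minimal bag for one agent, recurse
      -- the collection of subsets of R that satisfy some agent
      have hRC : ∃ i ∈ I, τ i ≤ R.sum (v i) := by
        obtain ⟨i, hi⟩ := hne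
        refine ⟨i, hi, ?_⟩
        have h1 := hbudget i hi
        have h2 : (0:ℝ) ≤ ((t:ℝ) + 1 - 1) * (τ i + s i) := by
          have : (0:ℝ) ≤ (t:ℝ) := Nat.cast_nonneg t
          have := add_nonneg (hτ i) (hs i)
          nlinarith
        push_cast at h1
        linarith
      set C : Finset (Finset (Fin m)) :=
        R.powerset.filter (fun B => ∃ i ∈ I, τ i ≤ B.sum (v i)) with hC
      have hRmem : R ∈ C := by
        rw [hC, Finset.mem_filter, Finset.mem_powerset]
        exact ⟨le_refl R, hRC⟩
      obtain ⟨B, hBmem, hBmin⟩ := Finset.exists_min_image C Finset.card ⟨R, hRmem⟩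
      rw [hC, Finset.mem_filter, Finset.mem_powerset] at hBmem
      obtain ⟨hBR, i, hiI, hiB⟩ := hBmem
      -- every active agent values B at most τ + s
      have hBsm : ∀ j ∈ I, B.sum (v j) ≤ τ j + s j := by
        intro j hjI
        rcases Finset.eq_empty_or_nonempty B with hB0 | ⟨g, hgB⟩
        · rw [hB0]; simpa using add_nonneg (hτ j) (hs j)
        · have herase : ∀ j' ∈ I, (B.erase g).sum (v j') < τ j' := by
            intro j' hj'
            by_contra hcon
            push_neg at hcon
            have hmem : B.erase g ∈ C := by
              rw [hC, Finset.mem_filter, Finset.mem_powerset]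
              exact ⟨(Finset.erase_subset g B).trans hBR, j', hj', hcon⟩
            have := hBmin _ hmem
            have hlt : (B.erase g).card < B.card := Finset.card_erase_lt_of_mem hgB
            omega
          have hsum : (B.erase g).sum (v j) + v j g = B.sum (v j) :=
            Finset.sum_erase_add B (v j) hgB
          have h1 := herase j hjI
          have h2 := hsmall j hjI g (hBR hgB)
          linarith
      -- recurse on the rest
      have hIne : (I.erase i).Nonempty := by
        rw [← Finset.card_pos, Finset.card_erase_of_mem hiI, hcard]; omega
      have hIcard : (I.erase i).card = t := by
        rw [Finset.card_erase_of_mem hiI, hcard]; omega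
      have hbudget' : ∀ j ∈ I.erase i,
          τ j + ((t : ℝ) - 1) * (τ j + s j) ≤ (R \ B).sum (v j) := by
        intro j hj
        have hjI := Finset.mem_of_mem_erase hj
        have hsub : (R \ B).sum (v j) = R.sum (v j) - B.sum (v j) :=
          Finset.sum_sdiff_eq_sub hBR
        have h1 := hbudget j hjI
        have h2 := hBsm j hjI
        push_cast at h1
        rw [hsub]
        nlinarith [add_nonneg (hτ j) (hs j)]
      obtain ⟨X', hX'supp, hX'disj, hX'cov, hX'sub, hX'val⟩ :=
        ih (I.erase i) hIne hIcard (R \ B)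
          (fun j hj g hg => hsmall j (Finset.mem_of_mem_erase hj) g (Finset.mem_sdiff.mp hg).1)
          hbudget'
      refine ⟨Function.update X' i B, ?_, ?_, ?_, ?_, ?_⟩
      · intro j hj
        have hji : j ≠ i := fun h => hj (h ▸ hiI)
        rw [Function.update_of_ne hji]
        exact hX'supp j (fun hmem => hj (Finset.mem_of_mem_erase hmem))
      · intro a b hab
        by_cases ha : a = i <;> by_cases hb : b = i
        · exact absurd (ha.trans hb.symm) hab
        · subst ha
          rw [Function.update_self, Function.update_of_ne hb]
          exact Finset.disjoint_left.mpr fun g hg hg' =>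
            (Finset.mem_sdiff.mp (hX'sub b hg')).2 hg
        · subst hb
          rw [Function.update_self, Function.update_of_ne ha]
          exact Finset.disjoint_left.mpr fun g hg hg' =>
            (Finset.mem_sdiff.mp (hX'sub a hg)).2 hg'
        · rw [Function.update_of_ne ha, Function.update_of_ne hb]
          exact hX'disj a b hab
      · intro g hg
        by_cases hgB : g ∈ B
        · exact ⟨i, by rw [Function.update_self]; exact hgB⟩
        · obtain ⟨j, hj⟩ := hX'cov g (Finset.mem_sdiff.mpr ⟨hg, hgB⟩)
          have hji : j ≠ i := by
            rintro rfl
            rw [hX'supp j (Finset.notMem_erase j I)] at hj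
            exact absurd hj (Finset.notMem_empty g)
          exact ⟨j, by rwa [Function.update_of_ne hji]⟩
      · intro j
        by_cases hj : j = i
        · subst hj; rw [Function.update_self]; exact hBR
        · rw [Function.update_of_ne hj]
          exact (hX'sub j).trans (Finset.sdiff_subset)
      · intro j hjI
        by_cases hj : j = i
        · subst hj; rw [Function.update_self]; exact hiB
        · rw [Function.update_of_ne hj]
          exact hX'val j (Finset.mem_erase.mpr ⟨hj, hjI⟩)

/-- Main combinatorial lemma: a `1/(2n)`-EFX allocation of any pool among any
nonempty set of active agents. -/
private lemma efx_main {n m : ℕ} (hn1 : 1 ≤ n) (v : Fin n → Fin m → ℝ)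
    (hv : ∀ i g, 0 ≤ v i g) :
    ∀ t : ℕ, ∀ I : Finset (Fin n), I.Nonempty → I.card = t →
    ∀ R : Finset (Fin m),
    ∃ X : Fin n → Finset (Fin m),
      (∀ i, i ∉ I → X i = ∅) ∧
      (∀ i j, i ≠ j → Disjoint (X i) (X j)) ∧
      (∀ g ∈ R, ∃ i, g ∈ X i) ∧
      (∀ i, X i ⊆ R) ∧
      (∀ i ∈ I, ∀ j, ∀ g ∈ X j,
        ((X j).erase g).sum (v i) ≤ 2 * (n : ℝ) * (X i).sum (v i)) := by
  have h2n : (0:ℝ) < 2 * n := by positivity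
  intro t
  induction t with
  | zero =>
    intro I hne hcard
    exact absurd hcard (by simpa using hne.card_pos.ne')
  | succ t ih =>
    intro I hne hcard R
    rcases Nat.eq_zero_or_pos t with ht0 | htpos
    · -- single agent gets everything
      subst ht0
      obtain ⟨i, hI⟩ := Finset.card_eq_one.mp hcard
      refine ⟨fun j => if j = i then R else ∅, ?_, ?_, ?_, ?_, ?_⟩
      · intro j hj
        have : j ≠ i := fun h => hj (by rw [hI]; exact Finset.mem_singleton.mpr h)
        simp [this]
      · intro a b hab
        by_cases ha : a = i <;> by_cases hb : b = i <;> simp_all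
      · intro g hg; exact ⟨i, by simp [hg]⟩
      · intro j; by_cases hj : j = i <;> simp [hj]
      · intro a haI j g hg
        have haI' : a = i := by rw [hI] at haI; exact Finset.mem_singleton.mp haI
        have hXi : (fun j => if j = i then R else ∅) i = R := by simp
        by_cases hji : j = i
        · rw [hji, hXi] at hg
          rw [haI', hji, hXi]
          have h1 : ((R.erase g)).sum (v i) ≤ R.sum (v i) :=
            Finset.sum_le_sum_of_subset_of_nonneg (Finset.erase_subset g R)
              (fun x _ _ => hv i x)
          have h2 : R.sum (v i) ≤ 2 * (n:ℝ) * R.sum (v i) := by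
            have := valnn v hv i R
            nlinarith [(by exact_mod_cast hn1 : (1:ℝ) ≤ (n:ℝ))]
          exact h1.trans h2
        · have hXj : (fun j' => if j' = i then R else ∅) j = ∅ := by simp [hji]
          rw [hXj] at hg
          exact absurd hg (Finset.notMem_empty g)
    · -- t+1 ≥ 2 agents
      by_cases hcarve : ∃ i ∈ I, ∃ g ∈ R, (R.erase g).sum (v i) ≤ 2 * (n:ℝ) * v i g
      · -- carve a singleton
        obtain ⟨i, hiI, g, hgR, hig⟩ := hcarve
        have hIne : (I.erase i).Nonempty := by
          rw [← Finset.card_pos, Finset.card_erase_of_mem hiI, hcard]; omega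
        have hIcard : (I.erase i).card = t := by
          rw [Finset.card_erase_of_mem hiI, hcard]; omega
        obtain ⟨X', hX'supp, hX'disj, hX'cov, hX'sub, hX'efx⟩ :=
          ih (I.erase i) hIne hIcard (R.erase g)
        refine ⟨Function.update X' i {g}, ?_, ?_, ?_, ?_, ?_⟩
        · intro j hj
          have hji : j ≠ i := fun h => hj (h ▸ hiI)
          rw [Function.update_of_ne hji]
          exact hX'supp j (fun hmem => hj (Finset.mem_of_mem_erase hmem))
        · intro a b hab
          by_cases ha : a = i <;> by_cases hb : b = i
          · exact absurd (ha.trans hb.symm) hab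
          · subst ha
            rw [Function.update_self, Function.update_of_ne hb]
            exact Finset.disjoint_left.mpr fun x hx hx' => by
              rw [Finset.mem_singleton] at hx
              exact (Finset.ne_of_mem_erase (hX'sub b hx')) (by rw [hx])
          · subst hb
            rw [Function.update_self, Function.update_of_ne ha]
            exact Finset.disjoint_left.mpr fun x hx hx' => by
              rw [Finset.mem_singleton] at hx'
              exact (Finset.ne_of_mem_erase (hX'sub a hx)) (by rw [hx'])
          · rw [Function.update_of_ne ha, Function.update_of_ne hb]
            exact hX'disj a b hab
        · intro x hx
          by_cases hxg : x = g
          · exact ⟨i, by rw [Function.update_self, hxg]; exact Finset.mem_singleton_self g⟩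
          · obtain ⟨j, hj⟩ := hX'cov x (Finset.mem_erase.mpr ⟨hxg, hx⟩)
            have hji : j ≠ i := by
              rintro rfl
              rw [hX'supp j (Finset.notMem_erase j I)] at hj
              exact absurd hj (Finset.notMem_empty x)
            exact ⟨j, by rwa [Function.update_of_ne hji]⟩
        · intro j
          by_cases hj : j = i
          · subst hj; rw [Function.update_self]
            exact Finset.singleton_subset_iff.mpr hgR
          · rw [Function.update_of_ne hj]
            exact (hX'sub j).trans (Finset.erase_subset g R)
        · intro a haI j g' hg'
          by_cases hai : a = i
          · -- the carved agent: its singleton beats anything inside R.erase g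
            rw [hai, Function.update_self]
            by_cases hji : j = i
            · rw [hji, Function.update_self] at hg'
              rw [hji, Function.update_self]
              rw [Finset.mem_singleton] at hg'
              rw [hg', Finset.erase_singleton, Finset.sum_empty, Finset.sum_singleton]
              exact mul_nonneg (by positivity) (hv i g)
            · rw [Function.update_of_ne hji] at hg' ⊢
              have h1 : ((X' j).erase g').sum (v i) ≤ (R.erase g).sum (v i) :=
                Finset.sum_le_sum_of_subset_of_nonneg
                  ((Finset.erase_subset g' (X' j)).trans (hX'sub j))
                  (fun x _ _ => hv i x)
              rw [Finset.sum_singleton]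
              exact h1.trans hig
          · rw [Function.update_of_ne hai]
            have haI' : a ∈ I.erase i := Finset.mem_erase.mpr ⟨hai, haI⟩
            by_cases hji : j = i
            · rw [hji, Function.update_self] at hg'
              rw [hji, Function.update_self]
              rw [Finset.mem_singleton] at hg'
              rw [hg', Finset.erase_singleton, Finset.sum_empty]
              exact mul_nonneg (by positivity) (valnn v hv a (X' a))
            · rw [Function.update_of_ne hji] at hg' ⊢
              exact hX'efx a haI' j g' hg'
      · -- no carvable pair: all goods are small; bag filling
        push_neg at hcarve
        have hsmall : ∀ i ∈ I, ∀ g ∈ R, v i g ≤ R.sum (v i) / (2 * n) := by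
          intro i hiI g hgR
          have h1 := hcarve i hiI g hgR
          have h2 : (R.erase g).sum (v i) + v i g = R.sum (v i) :=
            Finset.sum_erase_add R (v i) hgR
          rw [le_div_iff₀ h2n]
          nlinarith [hv i g]
        have hbudget : ∀ i ∈ I,
            (R.sum (v i) / (2*n)) + (((t:ℕ)+1 : ℝ) - 1) *
              ((R.sum (v i) / (2*n)) + (R.sum (v i) / (2*n))) ≤ R.sum (v i) := by
          intro i hiI
          have hQ := valnn v hv i R
          set Q := R.sum (v i) with hQdef
          have hct : ((t:ℝ) + 1) ≤ (n:ℝ) := by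
            have h := Finset.card_le_univ I
            rw [hcard] at h
            simp only [Finset.card_univ, Fintype.card_fin] at h
            exact_mod_cast h
          have hdiv : (0:ℝ) ≤ Q / (2*n) := div_nonneg hQ h2n.le
          have key : Q / (2*n) + ((t:ℝ)+1-1) * (Q/(2*n) + Q/(2*n)) =
              (2*((t:ℝ)+1) - 1) * (Q/(2*n)) := by ring
          rw [key]
          have h1 : (2*((t:ℝ)+1) - 1) * (Q/(2*n)) ≤ (2*(n:ℝ)) * (Q/(2*n)) := by
            apply mul_le_mul_of_nonneg_right _ hdiv
            linarith
          have h2 : (2*(n:ℝ)) * (Q/(2*n)) = Q := by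
            field_simp
          linarith
        obtain ⟨X, hXsupp, hXdisj, hXcov, hXsub, hXval⟩ :=
          bagfill v hv (fun i => R.sum (v i) / (2*n)) (fun i => R.sum (v i) / (2*n))
            (fun i => div_nonneg (valnn v hv i R) h2n.le)
            (fun i => div_nonneg (valnn v hv i R) h2n.le)
            (t+1) I hne hcard R hsmall (by push_cast; exact hbudget)
        refine ⟨X, hXsupp, hXdisj, hXcov, hXsub, ?_⟩
        intro a haI j g hg
        have h1 : ((X j).erase g).sum (v a) ≤ R.sum (v a) :=
          Finset.sum_le_sum_of_subset_of_nonneg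
            ((Finset.erase_subset g (X j)).trans (hXsub j))
            (fun x _ _ => hv a x)
        have h2 := hXval a haI
        calc ((X j).erase g).sum (v a) ≤ R.sum (v a) := h1
          _ = 2 * (n:ℝ) * (R.sum (v a) / (2*n)) := by field_simp
          _ ≤ 2 * (n:ℝ) * (X a).sum (v a) := by
              apply mul_le_mul_of_nonneg_left h2 h2n.le

/-- The guarantee of the Partition-and-RoundRobin algorithm: for `k ≥ 1`
and `λ ≥ 1` with `λ·m^(1/(2k-1)) > n`, such that `α_ℓ = λ·m^((2ℓ-1)/(2k-1))` is a
positive integer for every `ℓ ∈ {1,…,k-1}` and `Σ_ℓ α_ℓ ≤ m`, every profile of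
nonnegative additive valuations admits an allocation that is `α`-EFX for
`α = min{1/((√k+1)·λ·m^(1/(2k-1))), 1/(1+√k·(n/λ)·m^(1/(2k-1)))}`. -/
theorem stmt_9 (n m k : ℕ) (hn : 2 ≤ n) (hk : 1 ≤ k)
    (lam : ℝ) (hlam : 1 ≤ lam)
    (hlamn : (n : ℝ) < lam * (m : ℝ) ^ ((1 : ℝ) / (2 * (k : ℝ) - 1)))
    (hint : ∀ ℓ : ℕ, 1 ≤ ℓ → ℓ ≤ k - 1 →
      ∃ a : ℕ, 0 < a ∧ (a : ℝ) = lam * (m : ℝ) ^ ((2 * (ℓ : ℝ) - 1) / (2 * (k : ℝ) - 1)))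
    (hsum : ∑ ℓ ∈ Finset.Icc 1 (k - 1),
      lam * (m : ℝ) ^ ((2 * (ℓ : ℝ) - 1) / (2 * (k : ℝ) - 1)) ≤ (m : ℝ))
    (v : Fin n → Fin m → ℝ) (hv : ∀ i g, 0 ≤ v i g) :
    ∃ X : Fin n → Finset (Fin m),
      (∀ i j : Fin n, i ≠ j → Disjoint (X i) (X j)) ∧
      (∀ g : Fin m, ∃ i : Fin n, g ∈ X i) ∧
      (∀ i j : Fin n, X j ≠ ∅ → ∀ g ∈ X j,
        min (1 / ((Real.sqrt k + 1) * lam * (m : ℝ) ^ ((1 : ℝ) / (2 * (k : ℝ) - 1))))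
            (1 / (1 + Real.sqrt k * ((n : ℝ) / lam) * (m : ℝ) ^ ((1 : ℝ) / (2 * (k : ℝ) - 1))))
          * ((X j).erase g).sum (v i) ≤ (X i).sum (v i)) := by
  have h2n : (0:ℝ) < 2 * n := by positivity
  -- the guaranteed factor is at most 1/(2n)
  set M : ℝ := (m : ℝ) ^ ((1 : ℝ) / (2 * (k : ℝ) - 1)) with hM
  have hsqrt : (1:ℝ) ≤ Real.sqrt k := by
    rw [show (1:ℝ) = Real.sqrt 1 by simp]
    exact Real.sqrt_le_sqrt (by exact_mod_cast hk)
  have hlamM : (0:ℝ) < lam * M := lt_trans (by positivity) hlamn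
  have hden : 2 * (n:ℝ) ≤ (Real.sqrt k + 1) * lam * M := by
    have h1 : 2 * (n:ℝ) < 2 * (lam * M) := by linarith
    have h2 : 2 * (lam * M) ≤ (Real.sqrt k + 1) * (lam * M) := by
      apply mul_le_mul_of_nonneg_right _ hlamM.le
      linarith
    calc 2 * (n:ℝ) ≤ 2 * (lam * M) := h1.le
      _ ≤ (Real.sqrt k + 1) * (lam * M) := h2
      _ = (Real.sqrt k + 1) * lam * M := by ring
  have halpha : min (1 / ((Real.sqrt k + 1) * lam * M))
      (1 / (1 + Real.sqrt k * ((n : ℝ) / lam) * M)) ≤ 1 / (2 * n) := by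
    refine (min_le_left _ _).trans ?_
    exact one_div_le_one_div_of_le h2n hden
  obtain ⟨X, hsupp, hdisj, hcov, hsub, hefx⟩ :=
    efx_main (by omega : 1 ≤ n) v hv n Finset.univ ⟨⟨0, by omega⟩, Finset.mem_univ _⟩ (by simp)
      Finset.univ
  refine ⟨X, fun i j hij => hdisj i j hij, fun g => hcov g (Finset.mem_univ g), ?_⟩
  intro i j _ g hg
  have he := hefx i (Finset.mem_univ i) j g hg
  have hE : (0:ℝ) ≤ ((X j).erase g).sum (v i) := valnn v hv i _
  have h1 : min (1 / ((Real.sqrt k + 1) * lam * M))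
      (1 / (1 + Real.sqrt k * ((n : ℝ) / lam) * M)) * ((X j).erase g).sum (v i)
      ≤ (1 / (2*n)) * ((X j).erase g).sum (v i) :=
    mul_le_mul_of_nonneg_right halpha hE
  have h2 : (1 / (2*(n:ℝ))) * ((X j).erase g).sum (v i) ≤ (X i).sum (v i) := by
    rw [one_div_mul_eq_div, div_le_iff₀ h2n]
    linarith
  exact h1.trans h2
end

section
/- For every bivalued instance with n ≥ 2 agents and m goods — that is, for each agent i there exist reals h_i > ℓ_i ≥ 0 such that v_i(g) ∈ {h_i, ℓ_i} for every good g — there exists an allocation that is (1/2)-EFX. (This is the guarantee of the Match&Freeze-and-RoundRobin algorithm.) -/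
open Finset
namespace Stmt10Aux
variable {n m : ℕ}
def bundle (f : Fin m → Fin n) (i : Fin n) : Finset (Fin m) :=
  Finset.univ.filter fun g => f g = i
@[simp] lemma mem_bundle {f : Fin m → Fin n} {i : Fin n} {g : Fin m} :
    g ∈ bundle f i ↔ f g = i := by simp [bundle]
variable (v : Fin n → Fin m → ℝ)
def val (f : Fin m → Fin n) (i : Fin n) : ℝ := ∑ g ∈ bundle f i, v i g
noncomputable def w (f : Fin m → Fin n) (i : Fin n) : ℝ :=
  if 0 < val v f i then val v f i else 1
noncomputable def Npos (f : Fin m → Fin n) : ℕ :=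
  ∑ i, if 0 < val v f i then 1 else 0
noncomputable def Pprod (f : Fin m → Fin n) : ℝ := ∏ i, w v f i
noncomputable def Ssum (f : Fin m → Fin n) : ℕ :=
  ∑ i, if 0 < val v f i then (bundle f i).card else 0
variable {v}
lemma val_nonneg (hvnn : ∀ i g, 0 ≤ v i g) (f : Fin m → Fin n) (i : Fin n) :
    0 ≤ val v f i := Finset.sum_nonneg fun g _ => hvnn i g
lemma le_val_of_mem (hvnn : ∀ i g, 0 ≤ v i g) {f : Fin m → Fin n} {i : Fin n} {g : Fin m}
    (hg : g ∈ bundle f i) : v i g ≤ val v f i :=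
  Finset.single_le_sum (fun g _ => hvnn i g) hg
lemma w_pos (hvnn : ∀ i g, 0 ≤ v i g) (f : Fin m → Fin n) (i : Fin n) : 0 < w v f i := by
  unfold w; split <;> [assumption; norm_num]
lemma bundle_nonempty (h : 0 < val v f i) : (bundle f i).Nonempty := by
  by_contra hne
  rw [Finset.not_nonempty_iff_eq_empty] at hne
  simp [val, hne] at h
lemma bundle_update_tgt {f : Fin m → Fin n} {g₀ : Fin m} {k : Fin n} (h : f g₀ ≠ k) :
    bundle (Function.update f g₀ k) k = insert g₀ (bundle f k) := by
  ext g
  simp only [mem_bundle, Finset.mem_insert, Function.update]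
  by_cases hg : g = g₀ <;> simp [hg, h]
lemma bundle_update_src {f : Fin m → Fin n} {g₀ : Fin m} {k : Fin n} (h : f g₀ ≠ k) :
    bundle (Function.update f g₀ k) (f g₀) = (bundle f (f g₀)).erase g₀ := by
  ext g
  simp only [mem_bundle, Finset.mem_erase, Function.update]
  by_cases hg : g = g₀ <;> simp [hg, h, Ne.symm h]
lemma bundle_update_other {f : Fin m → Fin n} {g₀ : Fin m} {k q : Fin n}
    (h1 : q ≠ f g₀) (h2 : q ≠ k) :
    bundle (Function.update f g₀ k) q = bundle f q := by
  ext g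
  simp only [mem_bundle, Function.update]
  by_cases hg : g = g₀ <;> simp [hg, Ne.symm h1, Ne.symm h2]
lemma val_update_tgt {f : Fin m → Fin n} {g₀ : Fin m} {k : Fin n} (h : f g₀ ≠ k) :
    val v (Function.update f g₀ k) k = val v f k + v k g₀ := by
  have hnm : g₀ ∉ bundle f k := by simp [h]
  rw [val, bundle_update_tgt h, Finset.sum_insert hnm, val]; ring
lemma val_update_src {f : Fin m → Fin n} {g₀ : Fin m} {k : Fin n} (h : f g₀ ≠ k) :
    val v (Function.update f g₀ k) (f g₀) = val v f (f g₀) - v (f g₀) g₀ := by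
  have hmem : g₀ ∈ bundle f (f g₀) := by simp
  have := Finset.add_sum_erase (bundle f (f g₀)) (v (f g₀)) hmem
  rw [val, bundle_update_src h, val]
  linarith
lemma val_update_other {f : Fin m → Fin n} {g₀ : Fin m} {k q : Fin n}
    (h1 : q ≠ f g₀) (h2 : q ≠ k) :
    val v (Function.update f g₀ k) q = val v f q := by
  rw [val, bundle_update_other h1 h2, val]
lemma sum_split2 {M : Type*} [AddCommMonoid M] (F : Fin n → M) {p k : Fin n} (hpk : p ≠ k) :
    ∑ i, F i = F p + (F k + ∑ i ∈ (Finset.univ.erase p).erase k, F i) := by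
  have hk : k ∈ Finset.univ.erase p := by simp [Ne.symm hpk]
  rw [← Finset.add_sum_erase _ F (Finset.mem_univ p), ← Finset.add_sum_erase _ F hk]
lemma prod_split2 (F : Fin n → ℝ) {p k : Fin n} (hpk : p ≠ k) :
    ∏ i, F i = F p * (F k * ∏ i ∈ (Finset.univ.erase p).erase k, F i) := by
  have hk : k ∈ Finset.univ.erase p := by simp [Ne.symm hpk]
  rw [← Finset.mul_prod_erase _ F (Finset.mem_univ p), ← Finset.mul_prod_erase _ F hk]

section Blocked
variable (hvnn : ∀ i g, 0 ≤ v i g) {f : Fin m → Fin n}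
  (hN : ∀ f', Npos v f' ≤ Npos v f)
  (hP : ∀ f', Npos v f' = Npos v f → Pprod v f' ≤ Pprod v f)
  (hS : ∀ f', Npos v f' = Npos v f → Pprod v f' = Pprod v f → Ssum v f ≤ Ssum v f')

/-- Helper: if the new assignment agrees in value off `{p,k}` and positivity statuses of `p`,`k`
are preserved, then `Npos` is unchanged. -/
lemma Npos_eq {f' : Fin m → Fin n} {p k : Fin n} (hpk : p ≠ k)
    (hoth : ∀ q, q ≠ p → q ≠ k → val v f' q = val v f q)
    (hp : (0 < val v f' p) ↔ (0 < val v f p)) (hk : (0 < val v f' k) ↔ (0 < val v f k)) :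
    Npos v f' = Npos v f := by
  rw [Npos, Npos, sum_split2 _ hpk, sum_split2 (fun i => if 0 < val v f i then 1 else 0) hpk]
  have hrest : ∑ i ∈ (Finset.univ.erase p).erase k, (if 0 < val v f' i then 1 else 0)
      = ∑ i ∈ (Finset.univ.erase p).erase k, (if 0 < val v f i then 1 else 0) := by
    refine Finset.sum_congr rfl fun q hq => ?_
    have h1 := (Finset.mem_erase.mp hq).1
    have h2 := (Finset.mem_erase.mp (Finset.mem_erase.mp hq).2).1
    rw [hoth q h2 h1]
  rw [hrest]
  congr 1
  · simp only [hp]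
  · congr 1
    simp only [hk]

lemma Prest_eq {f' : Fin m → Fin n} {p k : Fin n}
    (hoth : ∀ q, q ≠ p → q ≠ k → val v f' q = val v f q) :
    ∏ i ∈ (Finset.univ.erase p).erase k, w v f' i
      = ∏ i ∈ (Finset.univ.erase p).erase k, w v f i := by
  refine Finset.prod_congr rfl fun q hq => ?_
  have h1 := (Finset.mem_erase.mp hq).1
  have h2 := (Finset.mem_erase.mp (Finset.mem_erase.mp hq).2).1
  rw [w, w, hoth q h2 h1]

lemma Prest_pos (hvnn : ∀ i g, 0 ≤ v i g) (f : Fin m → Fin n) (p k : Fin n) :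
    0 < ∏ i ∈ (Finset.univ.erase p).erase k, w v f i :=
  Finset.prod_pos fun q _ => w_pos hvnn f q


/-- If positivity statuses change as described, `Npos` increases by one. -/
lemma Npos_succ {f' : Fin m → Fin n} {p k : Fin n} (hpk : p ≠ k)
    (hoth : ∀ q, q ≠ p → q ≠ k → val v f' q = val v f q)
    (hp : (0 < val v f' p) ↔ (0 < val v f p)) (hk' : 0 < val v f' k)
    (hk0 : ¬ 0 < val v f k) :
    Npos v f' = Npos v f + 1 := by
  rw [Npos, Npos, sum_split2 _ hpk, sum_split2 (fun i => if 0 < val v f i then 1 else 0) hpk]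
  have hrest : ∑ i ∈ (Finset.univ.erase p).erase k, (if 0 < val v f' i then 1 else 0)
      = ∑ i ∈ (Finset.univ.erase p).erase k, (if 0 < val v f i then 1 else 0) := by
    refine Finset.sum_congr rfl fun q hq => ?_
    have h1 := (Finset.mem_erase.mp hq).1
    have h2 := (Finset.mem_erase.mp (Finset.mem_erase.mp hq).2).1
    rw [hoth q h2 h1]
  rw [hrest, if_pos hk', if_neg hk0,
    show (if 0 < val v f' p then (1:ℕ) else 0) = (if 0 < val v f p then 1 else 0) by
      simp only [hp]]
  omega

/-- Dead-goods lemma: at a maximal allocation, a good positively valued by someone is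
positively valued by its owner. -/
lemma dead (hvnn : ∀ i g, 0 ≤ v i g)
    (hN : ∀ f', Npos v f' ≤ Npos v f)
    (hP : ∀ f', Npos v f' = Npos v f → Pprod v f' ≤ Pprod v f)
    {g : Fin m} {k : Fin n} (hk : k ≠ f g) (hvk : 0 < v k g) : 0 < v (f g) g := by
  by_contra hle
  have hz : v (f g) g = 0 := le_antisymm (not_lt.mp hle) (hvnn _ g)
  have hpk : f g ≠ k := Ne.symm hk
  set f' := Function.update f g k with hf'
  have hvp' : val v f' (f g) = val v f (f g) := by
    rw [hf', val_update_src hpk, hz]; ring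
  have hvk' : val v f' k = val v f k + v k g := val_update_tgt hpk
  have hoth : ∀ q, q ≠ f g → q ≠ k → val v f' q = val v f q :=
    fun q h1 h2 => val_update_other h1 h2
  by_cases hVk : 0 < val v f k
  · have hNeq : Npos v f' = Npos v f :=
      Npos_eq hpk hoth (by rw [hvp']) (iff_of_true (by rw [hvk']; linarith) hVk)
    have hPle := hP f' hNeq
    rw [Pprod, Pprod, prod_split2 _ hpk, prod_split2 (w v f) hpk, Prest_eq hoth,
      ← mul_assoc, ← mul_assoc] at hPle
    have hQ := Prest_pos hvnn f (f g) k
    have hc := le_of_mul_le_mul_right hPle hQ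
    have hwp : w v f' (f g) = w v f (f g) := by rw [w, w, hvp']
    have hwk : w v f k = val v f k := if_pos hVk
    have hwk' : w v f' k = val v f k + v k g := by rw [w, hvk', if_pos (by linarith)]
    rw [hwp, hwk, hwk'] at hc
    have hwpp := w_pos hvnn f (f g)
    nlinarith
  · have hVk0 : val v f k = 0 := le_antisymm (not_lt.mp hVk) (val_nonneg hvnn f k)
    have hNs : Npos v f' = Npos v f + 1 :=
      Npos_succ hpk hoth (by rw [hvp']) (by rw [hvk', hVk0]; linarith) hVk
    have := hN f'
    omega

/-- The key exchange inequality at a maximal allocation. -/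
lemma star_ineq (hvnn : ∀ i g, 0 ≤ v i g)
    (hN : ∀ f', Npos v f' ≤ Npos v f)
    (hP : ∀ f', Npos v f' = Npos v f → Pprod v f' ≤ Pprod v f)
    {g : Fin m} {i : Fin n} (hi : i ≠ f g) (hVi : 0 < val v f i) :
    v i g * (val v f (f g) - v (f g) g) ≤ v (f g) g * val v f i := by
  rcases eq_or_lt_of_le (hvnn i g) with hz | hpos
  · rw [← hz, zero_mul]
    exact mul_nonneg (hvnn _ _) (le_of_lt hVi)
  · have hpj : 0 < v (f g) g := dead hvnn hN hP hi hpos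
    rcases le_or_gt (val v f (f g)) (v (f g) g) with hbig | hsm
    · have h1 : val v f (f g) - v (f g) g ≤ 0 := by linarith
      have r1 : 0 ≤ v (f g) g * val v f i := mul_nonneg (hvnn _ _) (le_of_lt hVi)
      nlinarith
    · have hpk : f g ≠ i := Ne.symm hi
      set f' := Function.update f g i with hf'
      have hvp' : val v f' (f g) = val v f (f g) - v (f g) g := val_update_src hpk
      have hvi' : val v f' i = val v f i + v i g := val_update_tgt hpk
      have hoth : ∀ q, q ≠ f g → q ≠ i → val v f' q = val v f q :=
        fun q h1 h2 => val_update_other h1 h2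
      have hVp : 0 < val v f (f g) := lt_trans hpj hsm
      have hNeq : Npos v f' = Npos v f :=
        Npos_eq hpk hoth (iff_of_true (by rw [hvp']; linarith) hVp)
          (iff_of_true (by rw [hvi']; linarith) hVi)
      have hPle := hP f' hNeq
      rw [Pprod, Pprod, prod_split2 _ hpk, prod_split2 (w v f) hpk, Prest_eq hoth,
        ← mul_assoc, ← mul_assoc] at hPle
      have hQ := Prest_pos hvnn f (f g) i
      have hc := le_of_mul_le_mul_right hPle hQ
      rw [show w v f' (f g) = val v f (f g) - v (f g) g by rw [w, hvp', if_pos (by linarith)],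
        show w v f' i = val v f i + v i g by rw [w, hvi', if_pos (by linarith)],
        show w v f (f g) = val v f (f g) from if_pos hVp,
        show w v f i = val v f i from if_pos hVi] at hc
      nlinarith


/-- Blocked dump move: agent `i` trades its whole bundle to `j` for the single good `gm`. -/
lemma dump_ineq (hvnn : ∀ i g, 0 ≤ v i g)
    (hN : ∀ f', Npos v f' ≤ Npos v f)
    (hP : ∀ f', Npos v f' = Npos v f → Pprod v f' ≤ Pprod v f)
    {i j : Fin n} {gm : Fin m} (hij : i ≠ j) (hgm : f gm = j)
    (hVi : 0 < val v f i) (hvim : 0 < v i gm)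
    (hTs : 0 < (∑ x ∈ bundle f i, v j x) + ∑ g ∈ (bundle f j).erase gm, v j g) :
    v i gm * ((∑ x ∈ bundle f i, v j x) + ∑ g ∈ (bundle f j).erase gm, v j g)
      ≤ val v f i * val v f j := by
  classical
  set f' : Fin m → Fin n := fun g' => if f g' = i then j else if g' = gm then i else f g'
    with hf'
  have hbi' : bundle f' i = {gm} := by
    ext g
    simp only [mem_bundle, hf', Finset.mem_singleton]
    by_cases h1 : f g = i
    · rw [if_pos h1]
      constructor
      · intro h; exact absurd h (Ne.symm hij)
      · intro h; subst h; exact absurd (hgm.symm.trans h1).symm hij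
    · rw [if_neg h1]
      by_cases h2 : g = gm
      · rw [if_pos h2]; simp [h2]
      · rw [if_neg h2]; simp [h1, h2]
  have hdisj : Disjoint (bundle f i) ((bundle f j).erase gm) := by
    refine Finset.disjoint_left.mpr fun g hg1 hg2 => ?_
    have e1 := mem_bundle.mp hg1
    have e2 := mem_bundle.mp (Finset.mem_of_mem_erase hg2)
    exact hij (e1.symm.trans e2)
  have hbj' : bundle f' j = (bundle f i) ∪ (bundle f j).erase gm := by
    ext g
    simp only [mem_bundle, hf', Finset.mem_union, Finset.mem_erase]
    by_cases h1 : f g = i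
    · rw [if_pos h1]; simp [h1]
    · rw [if_neg h1]
      by_cases h2 : g = gm
      · rw [if_pos h2]; subst h2; simp [hgm, hij, Ne.symm hij]
      · rw [if_neg h2]; simp [h1, h2]
  have hboth : ∀ q, q ≠ i → q ≠ j → bundle f' q = bundle f q := by
    intro q hqi hqj
    ext g
    simp only [mem_bundle, hf']
    by_cases h1 : f g = i
    · rw [if_pos h1, h1]; simp [Ne.symm hqj, Ne.symm hqi]
    · rw [if_neg h1]
      by_cases h2 : g = gm
      · rw [if_pos h2, h2, hgm]; simp [Ne.symm hqi, Ne.symm hqj]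
      · rw [if_neg h2]
  have hvi' : val v f' i = v i gm := by
    rw [val, hbi']; exact Finset.sum_singleton _ _
  have hvj' : val v f' j = (∑ x ∈ bundle f i, v j x) + ∑ g ∈ (bundle f j).erase gm, v j g := by
    rw [val, hbj']; exact Finset.sum_union hdisj
  have hoth : ∀ q, q ≠ i → q ≠ j → val v f' q = val v f q := by
    intro q h1 h2; rw [val, hboth q h1 h2, val]
  have hvjm : 0 < v j gm := by
    have := dead (f := f) hvnn hN hP (g := gm) (k := i) (by rw [hgm]; exact hij) hvim
    rwa [hgm] at this
  have hVj : 0 < val v f j := lt_of_lt_of_le hvjm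
    (le_val_of_mem hvnn (by simp [hgm]))
  have hNeq : Npos v f' = Npos v f :=
    Npos_eq hij hoth (iff_of_true (by rw [hvi']; exact hvim) hVi)
      (iff_of_true (by rw [hvj']; exact hTs) hVj)
  have hPle := hP f' hNeq
  rw [Pprod, Pprod, prod_split2 _ hij, prod_split2 (w v f) hij, Prest_eq hoth,
    ← mul_assoc, ← mul_assoc] at hPle
  have hQ := Prest_pos hvnn f i j
  have hc := le_of_mul_le_mul_right hPle hQ
  rw [show w v f' i = v i gm by rw [w, hvi', if_pos hvim],
    show w v f' j = (∑ x ∈ bundle f i, v j x) + ∑ g ∈ (bundle f j).erase gm, v j g by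
      rw [w, hvj', if_pos hTs],
    show w v f i = val v f i from if_pos hVi,
    show w v f j = val v f j from if_pos hVj] at hc
  exact hc

/-- A positive-value agent cannot hold a globally worthless good while some agent has
value zero: moving it strictly decreases `Ssum`. -/
lemma drop_dead (hvnn : ∀ i g, 0 ≤ v i g)
    (hS : ∀ f', Npos v f' = Npos v f → Pprod v f' = Pprod v f → Ssum v f ≤ Ssum v f')
    {g₀ : Fin m} {i : Fin n} (hi : i ≠ f g₀) (hVi : val v f i = 0)
    (hvig : v i g₀ = 0) (hvjg : v (f g₀) g₀ = 0) (hVj : 0 < val v f (f g₀)) : False := by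
  have hpk : f g₀ ≠ i := Ne.symm hi
  set f' := Function.update f g₀ i with hf'
  have hvp' : val v f' (f g₀) = val v f (f g₀) := by rw [hf', val_update_src hpk, hvjg]; ring
  have hvi' : val v f' i = val v f i := by rw [hf', val_update_tgt hpk, hvig]; ring
  have hvall : ∀ q, val v f' q = val v f q := by
    intro q
    by_cases h1 : q = f g₀
    · rw [h1]; exact hvp'
    · by_cases h2 : q = i
      · rw [h2]; exact hvi'
      · exact val_update_other h1 h2
  have hNeq : Npos v f' = Npos v f := by
    refine Finset.sum_congr rfl fun q _ => ?_
    rw [hvall q]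
  have hPeq : Pprod v f' = Pprod v f := by
    refine Finset.prod_congr rfl fun q _ => ?_
    rw [w, w, hvall q]
  have hmem : g₀ ∈ bundle f (f g₀) := by simp
  have hcard : (bundle f' (f g₀)).card + 1 = (bundle f (f g₀)).card := by
    rw [hf', bundle_update_src hpk]
    exact Finset.card_erase_add_one hmem
  have hSs : Ssum v f' + 1 = Ssum v f := by
    rw [Ssum, Ssum, sum_split2 _ hpk,
      sum_split2 (fun q => if 0 < val v f q then (bundle f q).card else 0) hpk]
    have hrest : ∀ q ∈ (Finset.univ.erase (f g₀)).erase i,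
        (if 0 < val v f' q then (bundle f' q).card else 0)
          = (if 0 < val v f q then (bundle f q).card else 0) := by
      intro q hq
      have h1 := (Finset.mem_erase.mp hq).1
      have h2 := (Finset.mem_erase.mp (Finset.mem_erase.mp hq).2).1
      rw [hvall q, hf', bundle_update_other h2 h1]
    rw [Finset.sum_congr rfl hrest]
    have hiz : ¬ 0 < val v f i := by rw [hVi]; exact lt_irrefl 0
    have hiz' : ¬ 0 < val v f' i := by rw [hvi', hVi]; exact lt_irrefl 0
    rw [if_pos (by rw [hvp']; exact hVj), if_pos hVj, if_neg hiz, if_neg hiz']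
    omega
  have := hS f' hNeq hPeq
  omega

end Blocked

lemma exists_max (hn : 0 < n) (v : Fin n → Fin m → ℝ) :
    ∃ f : Fin m → Fin n,
      (∀ f', Npos v f' ≤ Npos v f) ∧
      (∀ f', Npos v f' = Npos v f → Pprod v f' ≤ Pprod v f) ∧
      (∀ f', Npos v f' = Npos v f → Pprod v f' = Pprod v f → Ssum v f ≤ Ssum v f') := by
  classical
  have hne : (Finset.univ : Finset (Fin m → Fin n)).Nonempty :=
    ⟨fun _ => ⟨0, hn⟩, Finset.mem_univ _⟩
  obtain ⟨f1, -, h1⟩ := Finset.exists_max_image Finset.univ (Npos v) hne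
  set A := Finset.univ.filter (fun f : Fin m → Fin n => Npos v f = Npos v f1) with hA
  have hAne : A.Nonempty := ⟨f1, by simp [hA]⟩
  obtain ⟨f2, hf2, h2⟩ := Finset.exists_max_image A (Pprod v) hAne
  set B := A.filter (fun f => Pprod v f = Pprod v f2) with hB
  have hBne : B.Nonempty := ⟨f2, by simp [hB, hf2]⟩
  obtain ⟨f3, hf3, h3⟩ := Finset.exists_min_image B (Ssum v) hBne
  have hf3B := Finset.mem_filter.mp hf3
  have hf3A := Finset.mem_filter.mp hf3B.1
  refine ⟨f3, ?_, ?_, ?_⟩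
  · intro f'; rw [hf3A.2]; exact h1 f' (Finset.mem_univ _)
  · intro f' hNe
    rw [hf3B.2]
    refine h2 f' ?_
    simp only [hA, Finset.mem_filter, Finset.mem_univ, true_and]
    rw [hNe, hf3A.2]
  · intro f' hNe hPe
    refine h3 f' ?_
    simp only [hB, hA, Finset.mem_filter, Finset.mem_univ, true_and]
    exact ⟨hNe.trans hf3A.2, hPe.trans hf3B.2⟩

theorem main (hn : 0 < n) (v : Fin n → Fin m → ℝ) (hi lo : Fin n → ℝ)
    (hlt : ∀ i, lo i < hi i) (hl0 : ∀ i, 0 ≤ lo i)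
    (hv : ∀ i g, v i g = hi i ∨ v i g = lo i) :
    ∃ f : Fin m → Fin n, ∀ (i j : Fin n) (g₀ : Fin m), g₀ ∈ bundle f j →
      ∑ g ∈ (bundle f j).erase g₀, v i g ≤ 2 * val v f i := by
  classical
  have hvnn : ∀ i g, 0 ≤ v i g := by
    intro i g
    rcases hv i g with e | e <;> rw [e]
    · linarith [hlt i, hl0 i]
    · exact hl0 i
  obtain ⟨f, hN, hP, hS⟩ := exists_max hn v
  refine ⟨f, ?_⟩
  intro i j g₀ hg₀
  by_contra hcon
  push_neg at hcon
  have hfg₀ : f g₀ = j := mem_bundle.mp hg₀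
  have hVinn : 0 ≤ val v f i := val_nonneg hvnn f i
  have hij : i ≠ j := by
    rintro rfl
    have hle : ∑ g ∈ (bundle f i).erase g₀, v i g ≤ val v f i :=
      Finset.sum_le_sum_of_subset_of_nonneg (Finset.erase_subset _ _)
        (fun g _ _ => hvnn i g)
    linarith
  have hex : ∃ g1 ∈ (bundle f j).erase g₀, 0 < v i g1 := by
    by_contra hno
    push_neg at hno
    have : ∑ g ∈ (bundle f j).erase g₀, v i g ≤ 0 := Finset.sum_nonpos hno
    linarith
  obtain ⟨gg, hgge, hggpos⟩ := hex
  have hggXj : gg ∈ bundle f j := Finset.mem_of_mem_erase hgge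
  have hggne : gg ≠ g₀ := (Finset.mem_erase.mp hgge).1
  have hfgg : f gg = j := mem_bundle.mp hggXj
  have hvjgg : 0 < v j gg := by
    have := dead hvnn hN hP (g := gg) (k := i) (by rw [hfgg]; exact hij) hggpos
    rwa [hfgg] at this
  have hVj : 0 < val v f j := lt_of_lt_of_le hvjgg (le_val_of_mem hvnn hggXj)
  have hsplitgg : val v f j = v j gg + ∑ g ∈ (bundle f j).erase gg, v j g :=
    (Finset.add_sum_erase _ _ hggXj).symm
  rcases eq_or_lt_of_le hVinn with hVi | hVi
  · -- Case A : val v f i = 0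
    rcases eq_or_lt_of_le (Finset.sum_nonneg fun g (_ : g ∈ (bundle f j).erase gg) => hvnn j g)
      with hz | hpos
    · -- all of X_j except gg is worthless to j: drop the dead good g₀
      have hallz : ∀ g ∈ (bundle f j).erase gg, v j g = 0 :=
        (Finset.sum_eq_zero_iff_of_nonneg (fun g _ => hvnn j g)).mp hz.symm
      have hg₀e : g₀ ∈ (bundle f j).erase gg := Finset.mem_erase.mpr ⟨Ne.symm hggne, hg₀⟩
      have hvjg₀ : v j g₀ = 0 := hallz g₀ hg₀e
      have hvig₀ : v i g₀ = 0 := by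
        by_contra hne0
        have hpos0 : 0 < v i g₀ := lt_of_le_of_ne (hvnn i g₀) (Ne.symm hne0)
        have := dead hvnn hN hP (g := g₀) (k := i) (by rw [hfg₀]; exact hij) hpos0
        rw [hfg₀] at this
        linarith
      exact drop_dead hvnn hS (by rw [hfg₀]; exact hij) hVi.symm hvig₀
        (by rw [hfg₀]; exact hvjg₀) (by rw [hfg₀]; exact hVj)
    · -- making i positive increases Npos
      have hpk : f gg ≠ i := by rw [hfgg]; exact Ne.symm hij
      set f' := Function.update f gg i with hf'
      have hvp' : val v f' (f gg) = val v f (f gg) - v (f gg) gg := val_update_src hpk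
      have hvi' : val v f' i = val v f i + v i gg := val_update_tgt hpk
      have hNs : Npos v f' = Npos v f + 1 := by
        refine Npos_succ hpk (fun q h1 h2 => val_update_other h1 h2) ?_ ?_ ?_
        · rw [hvp', hfgg]
          exact iff_of_true (by linarith) hVj
        · rw [hvi', ← hVi]; linarith
        · rw [← hVi]; exact lt_irrefl 0
      have := hN f'
      omega
  · -- Case B : 0 < val v f i
    set Pp := (bundle f j).filter (fun g => 0 < v i g) with hPp
    have hggPp : gg ∈ Pp := Finset.mem_filter.mpr ⟨hggXj, hggpos⟩
    obtain ⟨gm, hgmPp, hgmmin⟩ :=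
      Finset.exists_min_image Pp (fun g => v j g / v i g) ⟨gg, hggPp⟩
    have hgmXj : gm ∈ bundle f j := (Finset.mem_filter.mp hgmPp).1
    have hgmpos : 0 < v i gm := (Finset.mem_filter.mp hgmPp).2
    have hfgm : f gm = j := mem_bundle.mp hgmXj
    have hvjgm : 0 < v j gm := by
      have := dead hvnn hN hP (g := gm) (k := i) (by rw [hfgm]; exact hij) hgmpos
      rwa [hfgm] at this
    have hstar : ∀ g ∈ bundle f j, v i g * (val v f j - v j g) ≤ v j g * val v f i := by
      intro g hg
      have hfg : f g = j := mem_bundle.mp hg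
      have := star_ineq hvnn hN hP (g := g) (i := i) (by rw [hfg]; exact hij) hVi
      rwa [hfg] at this
    have hsplit : val v f j = v j gm + ∑ g ∈ (bundle f j).erase gm, v j g :=
      (Finset.add_sum_erase _ _ hgmXj).symm
    have hPpsub : Pp.erase gm ⊆ (bundle f j).erase gm :=
      Finset.erase_subset_erase _ (Finset.filter_subset _ _)
    have hsjle : ∑ g ∈ Pp.erase gm, v j g ≤ ∑ g ∈ (bundle f j).erase gm, v j g :=
      Finset.sum_le_sum_of_subset_of_nonneg hPpsub (fun g _ _ => hvnn j g)
    have hclaim : ∑ g ∈ Pp.erase gm, v i g ≤ val v f i := by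
      have h1 : v j gm * (∑ g ∈ Pp.erase gm, v i g)
          ≤ v i gm * (∑ g ∈ Pp.erase gm, v j g) := by
        rw [Finset.mul_sum, Finset.mul_sum]
        refine Finset.sum_le_sum fun g hg => ?_
        have hgPp := Finset.mem_of_mem_erase hg
        have hgipos : 0 < v i g := (Finset.mem_filter.mp hgPp).2
        have hmin := hgmmin g hgPp
        rw [div_le_div_iff₀ hgmpos hgipos] at hmin
        calc v j gm * v i g ≤ v j g * v i gm := hmin
          _ = v i gm * v j g := mul_comm _ _
      have h2 : v i gm * (∑ g ∈ Pp.erase gm, v j g)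
          ≤ v i gm * (val v f j - v j gm) :=
        mul_le_mul_of_nonneg_left (by linarith) (le_of_lt hgmpos)
      have h3 := hstar gm hgmXj
      exact le_of_mul_le_mul_left (by linarith) hvjgm
    have hzeros : ∑ g ∈ (bundle f j).erase gm, v i g = ∑ g ∈ Pp.erase gm, v i g := by
      rw [← Finset.sum_filter_add_sum_filter_not ((bundle f j).erase gm)
        (fun g => 0 < v i g) (v i)]
      have e1 : ((bundle f j).erase gm).filter (fun g => 0 < v i g) = Pp.erase gm := by
        rw [hPp, Finset.filter_erase]
      have e2 : ∑ g ∈ ((bundle f j).erase gm).filter (fun g => ¬ 0 < v i g), v i g = 0 := by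
        refine Finset.sum_eq_zero fun g hg => ?_
        exact le_antisymm (not_lt.mp (Finset.mem_filter.mp hg).2) (hvnn i g)
      rw [e1, e2, add_zero]
    have hclaim' : ∑ g ∈ (bundle f j).erase gm, v i g ≤ val v f i := by
      rw [hzeros]; exact hclaim
    have htot : ∑ g ∈ bundle f j, v i g = v i gm + ∑ g ∈ (bundle f j).erase gm, v i g :=
      (Finset.add_sum_erase _ _ hgmXj).symm
    have htot0 : ∑ g ∈ bundle f j, v i g = v i g₀ + ∑ g ∈ (bundle f j).erase g₀, v i g :=
      (Finset.add_sum_erase _ _ hg₀).symm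
    by_cases hgm0 : g₀ = gm
    · rw [hgm0] at hcon
      linarith
    · by_cases hgmVi : v i gm ≤ val v f i
      · linarith [hvnn i g₀]
      · push_neg at hgmVi
        obtain ⟨x₀, hx₀⟩ := bundle_nonempty hVi
        have hgmH : v i gm = hi i := by
          rcases hv i gm with e | e
          · exact e
          · exfalso
            have hx0 : lo i ≤ v i x₀ := by
              rcases hv i x₀ with e2 | e2 <;> rw [e2]
              linarith [hlt i]
            have := le_val_of_mem hvnn hx₀
            rw [e] at hgmVi
            linarith
        have hXilow : ∀ x ∈ bundle f i, v i x = lo i := by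
          intro x hx
          rcases hv i x with e | e
          · exfalso
            have := le_val_of_mem hvnn hx
            rw [e] at this
            rw [hgmH] at hgmVi
            linarith
          · exact e
        have hVib : val v f i = (bundle f i).card * lo i := by
          rw [val, Finset.sum_congr rfl hXilow, Finset.sum_const, nsmul_eq_mul]
        have hlipos : 0 < lo i := by
          by_contra hle
          have hli0 : lo i = 0 := le_antisymm (not_lt.mp hle) (hl0 i)
          rw [hli0, mul_zero] at hVib
          linarith
        have hElow : ∀ g ∈ (bundle f j).erase gm, v i g = lo i := by
          intro g hg
          rcases hv i g with e | e
          · exfalso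
            have hgPp : g ∈ Pp.erase gm := by
              refine Finset.mem_erase.mpr ⟨(Finset.mem_erase.mp hg).1, ?_⟩
              refine Finset.mem_filter.mpr ⟨Finset.mem_of_mem_erase hg, ?_⟩
              rw [e]; linarith [hlt i, hl0 i]
            have hle2 : v i g ≤ ∑ g' ∈ Pp.erase gm, v i g' :=
              Finset.single_le_sum (fun g' _ => hvnn i g') hgPp
            rw [e] at hle2
            rw [hgmH] at hgmVi
            linarith
          · exact e
        set t1 := ((bundle f j).erase gm).card with ht1
        have hsE : ∑ g ∈ (bundle f j).erase gm, v i g = (t1 : ℝ) * lo i := by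
          rw [Finset.sum_congr rfl hElow, Finset.sum_const, nsmul_eq_mul]
        have ht1b : (t1 : ℝ) ≤ (bundle f i).card := by
          have h1 : (t1 : ℝ) * lo i ≤ (bundle f i).card * lo i := by
            rw [← hsE, ← hVib]; exact hclaim'
          exact le_of_mul_le_mul_right h1 hlipos
        have hg₀E : g₀ ∈ (bundle f j).erase gm := Finset.mem_erase.mpr ⟨hgm0, hg₀⟩
        have ht1pos : 0 < t1 := Finset.card_pos.mpr ⟨g₀, hg₀E⟩
        have hvig₀ : v i g₀ = lo i := hElow g₀ hg₀E
        have hviol2 : 2 * ((bundle f i).card * lo i) < hi i + (t1 : ℝ) * lo i - lo i := by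
          linarith [hcon, htot, htot0, hsE, hVib, hgmH, hvig₀]
        have hvjg₀ : 0 < v j g₀ := by
          have := dead hvnn hN hP (g := g₀) (k := i) (by rw [hfg₀]; exact hij)
            (by rw [hvig₀]; exact hlipos)
          rwa [hfg₀] at this
        have hspos : 0 < ∑ g ∈ (bundle f j).erase gm, v j g :=
          lt_of_lt_of_le hvjg₀ (Finset.single_le_sum (fun g _ => hvnn j g) hg₀E)
        have hstargm : hi i * (∑ g ∈ (bundle f j).erase gm, v j g)
            ≤ v j gm * val v f i := by
          have hst := hstar gm hgmXj
          have e : val v f j - v j gm = ∑ g ∈ (bundle f j).erase gm, v j g := by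
            linarith
          rw [hgmH, e] at hst
          exact hst
        have hper : ∀ g ∈ (bundle f j).erase gm, v j gm ≤ (bundle f i).card * v j g := by
          intro g hg
          have hgXj := Finset.mem_of_mem_erase hg
          have hst := hstar g hgXj
          have hvig : v i g = lo i := hElow g hg
          have hge : v j gm ≤ val v f j - v j g := by
            have : v j g ≤ ∑ g' ∈ (bundle f j).erase gm, v j g' :=
              Finset.single_le_sum (fun g' _ => hvnn j g') hg
            linarith
          have h1 : lo i * v j gm ≤ v j g * ((bundle f i).card * lo i) := by
            calc lo i * v j gm ≤ lo i * (val v f j - v j g) :=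
                  mul_le_mul_of_nonneg_left hge (hl0 i)
              _ = v i g * (val v f j - v j g) := by rw [hvig]
              _ ≤ v j g * val v f i := hst
              _ = v j g * ((bundle f i).card * lo i) := by rw [hVib]
          have h2 : lo i * v j gm ≤ lo i * ((bundle f i).card * v j g) := by
            have e : v j g * ((bundle f i).card * lo i)
                = lo i * ((bundle f i).card * v j g) := by ring
            linarith
          exact le_of_mul_le_mul_left h2 hlipos
        by_cases hcase : ∃ g ∈ (bundle f j).erase gm, v j g = lo j
        · obtain ⟨g2, hg2, hg2l⟩ := hcase
          have hTlb : ((bundle f i).card : ℝ) * lo j ≤ ∑ x ∈ bundle f i, v j x := by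
            calc ((bundle f i).card : ℝ) * lo j = ∑ _x ∈ bundle f i, lo j := by
                  rw [Finset.sum_const, nsmul_eq_mul]
              _ ≤ ∑ x ∈ bundle f i, v j x := by
                  refine Finset.sum_le_sum fun x _ => ?_
                  rcases hv j x with e | e <;> rw [e]
                  linarith [hlt j]
          have hqT : v j gm ≤ ∑ x ∈ bundle f i, v j x := by
            have := hper g2 hg2
            rw [hg2l] at this
            linarith
          have hTs : 0 < (∑ x ∈ bundle f i, v j x) + ∑ g ∈ (bundle f j).erase gm, v j g := by
            have : (0:ℝ) ≤ ∑ x ∈ bundle f i, v j x :=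
              Finset.sum_nonneg fun x _ => hvnn j x
            linarith
          have hdump := dump_ineq hvnn hN hP hij hfgm hVi hgmpos hTs
          have hqspos : 0 < v j gm + ∑ g ∈ (bundle f j).erase gm, v j g := by linarith
          have hhle : hi i ≤ val v f i := by
            have h1 : hi i * (v j gm + ∑ g ∈ (bundle f j).erase gm, v j g)
                ≤ val v f i * (v j gm + ∑ g ∈ (bundle f j).erase gm, v j g) := by
              calc hi i * (v j gm + ∑ g ∈ (bundle f j).erase gm, v j g)
                  = v i gm * (v j gm + ∑ g ∈ (bundle f j).erase gm, v j g) := by rw [hgmH]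
                _ ≤ v i gm * ((∑ x ∈ bundle f i, v j x)
                      + ∑ g ∈ (bundle f j).erase gm, v j g) :=
                    mul_le_mul_of_nonneg_left (by linarith) (hvnn i gm)
                _ ≤ val v f i * val v f j := hdump
                _ = val v f i * (v j gm + ∑ g ∈ (bundle f j).erase gm, v j g) := by
                    rw [← hsplit]
            exact le_of_mul_le_mul_right h1 hqspos
          rw [hVib] at hhle
          nlinarith [hviol2, hhle, ht1b, hlipos]
        · push_neg at hcase
          have hallh : ∀ g ∈ (bundle f j).erase gm, v j g = hi j := by
            intro g hg
            rcases hv j g with e | e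
            · exact e
            · exact absurd e (hcase g hg)
          have hsh : ∑ g ∈ (bundle f j).erase gm, v j g = (t1 : ℝ) * hi j := by
            rw [Finset.sum_congr rfl hallh, Finset.sum_const, nsmul_eq_mul]
          have hq_le : v j gm ≤ hi j := by
            rcases hv j gm with e | e <;> rw [e]
            linarith [hlt j]
          have hhjpos : 0 < hi j := lt_of_le_of_lt (hl0 j) (hlt j)
          have h1 : hi i * ((t1 : ℝ) * hi j) ≤ v j gm * val v f i := by
            rw [← hsh]; exact hstargm
          have h2 : v j gm * val v f i ≤ hi j * val v f i :=
            mul_le_mul_of_nonneg_right hq_le (le_of_lt hVi)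
          have h3 : hi i * (t1 : ℝ) ≤ val v f i := by
            have h4 : (hi i * (t1 : ℝ)) * hi j ≤ val v f i * hi j := by
              calc (hi i * (t1 : ℝ)) * hi j = hi i * ((t1 : ℝ) * hi j) := by ring
                _ ≤ v j gm * val v f i := h1
                _ ≤ hi j * val v f i := h2
                _ = val v f i * hi j := by ring
            exact le_of_mul_le_mul_right h4 hhjpos
          have hhipos : 0 < hi i := lt_of_le_of_lt (hl0 i) (hlt i)
          have ht1ge1 : (1 : ℝ) ≤ (t1 : ℝ) := by exact_mod_cast ht1pos
          rw [hgmH] at hgmVi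
          have h5 : hi i * 1 ≤ hi i * (t1 : ℝ) :=
            mul_le_mul_of_nonneg_left ht1ge1 (le_of_lt hhipos)
          rw [mul_one] at h5
          linarith [h3, hgmVi, h5]

end Stmt10Aux

/-- Every bivalued instance (each agent `i` has two possible values
`h_i > ℓ_i ≥ 0` for the goods) admits a `1/2`-EFX allocation (the guarantee of the
Match&Freeze-and-RoundRobin algorithm). -/
theorem stmt_10 (n m : ℕ) (hn : 2 ≤ n)
    (v : Fin n → Fin m → ℝ)
    (hbi : ∀ i : Fin n, ∃ hi li : ℝ, li < hi ∧ 0 ≤ li ∧ ∀ g : Fin m, v i g = hi ∨ v i g = li) :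
    ∃ X : Fin n → Finset (Fin m),
      (∀ i j : Fin n, i ≠ j → Disjoint (X i) (X j)) ∧
      (∀ g : Fin m, ∃ i : Fin n, g ∈ X i) ∧
      (∀ i j : Fin n, X j ≠ ∅ → ∀ g ∈ X j,
        (1 / 2 : ℝ) * ((X j).erase g).sum (v i) ≤ (X i).sum (v i)) := by
  classical
  choose hi lo hlt hl0 hv using hbi
  obtain ⟨f, hf⟩ := Stmt10Aux.main (by omega : 0 < n) v hi lo hlt hl0 hv
  refine ⟨Stmt10Aux.bundle f, ?_, ?_, ?_⟩
  · intro i j hij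
    exact Finset.disjoint_left.mpr fun g hg1 hg2 =>
      hij ((Stmt10Aux.mem_bundle.mp hg1).symm.trans (Stmt10Aux.mem_bundle.mp hg2))
  · intro g
    exact ⟨f g, Stmt10Aux.mem_bundle.mpr rfl⟩
  · intro i j _ g hg
    have h2 : ((Stmt10Aux.bundle f j).erase g).sum (v i)
        ≤ 2 * (Stmt10Aux.bundle f i).sum (v i) := hf i j g hg
    linarith
end

section
/- For every n ≥ 2 agents, every finite set of m goods, and every profile of nonnegative additive valuations (v_1,…,v_n), there exists an EF1 allocation: an allocation X = (X_1,…,X_n) such that for every pair of agents i, j with X_j ≠ ∅ there exists a good g ∈ X_j with v_i(X_i) ≥ v_i(X_j \ {g}). (This is the output of the RoundRobin algorithm, which uses only the agents' ordinal preference rankings.) -/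
/-- Every self-map of a nonempty finite type has a periodic point. -/
lemma stmt14_periodic_point {α : Type*} [Fintype α] [Nonempty α] (f : α → α) :
    ∃ (j : α) (p : ℕ), 0 < p ∧ f^[p] j = j := by
  obtain ⟨x⟩ := (inferInstance : Nonempty α)
  obtain ⟨a, b, hab, heq⟩ := Fintype.exists_ne_map_eq_of_card_lt
    (fun s : Fin (Fintype.card α + 1) => f^[(s : ℕ)] x) (by simp)
  have key : ∀ a b : Fin (Fintype.card α + 1), (a : ℕ) < (b : ℕ) →
      f^[(a : ℕ)] x = f^[(b : ℕ)] x → ∃ (j : α) (p : ℕ), 0 < p ∧ f^[p] j = j := by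
    intro a b h he
    refine ⟨f^[(a : ℕ)] x, (b : ℕ) - a, by omega, ?_⟩
    rw [← Function.iterate_add_apply]
    have : (b : ℕ) - a + a = b := by omega
    rw [this, ← he]
  rcases lt_or_gt_of_ne (fun h : (a : ℕ) = (b : ℕ) => hab (Fin.ext h)) with h | h
  · exact key a b h heq
  · exact key b a h heq.symm

/-- For every profile of nonnegative additive valuations there exists an
EF1 allocation (the output of the RoundRobin algorithm). -/
theorem stmt_14 (n m : ℕ) (hn : 2 ≤ n)
    (v : Fin n → Fin m → ℝ) (hv : ∀ i g, 0 ≤ v i g) :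
    ∃ X : Fin n → Finset (Fin m),
      (∀ i j : Fin n, i ≠ j → Disjoint (X i) (X j)) ∧
      (∀ g : Fin m, ∃ i : Fin n, g ∈ X i) ∧
      (∀ i j : Fin n, X j ≠ ∅ → ∃ g ∈ X j,
        ((X j).erase g).sum (v i) ≤ (X i).sum (v i)) := by
  classical
  have hn0 : 0 < n := by omega
  haveI : Nonempty (Fin n) := ⟨⟨0, hn0⟩⟩
  have main : ∀ S : Finset (Fin m), ∃ X : Fin n → Finset (Fin m),
      (∀ i j : Fin n, i ≠ j → Disjoint (X i) (X j)) ∧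
      (∀ g : Fin m, g ∈ S ↔ ∃ i : Fin n, g ∈ X i) ∧
      (∀ i j : Fin n, X j ≠ ∅ → ∃ g ∈ X j,
        ((X j).erase g).sum (v i) ≤ (X i).sum (v i)) := by
    intro S
    induction S using Finset.induction_on with
    | empty =>
      exact ⟨fun _ => ∅, by simp, by simp, by simp⟩
    | @insert a S ha IH =>
      set P : (Fin n → Finset (Fin m)) → Prop := fun X =>
        (∀ i j : Fin n, i ≠ j → Disjoint (X i) (X j)) ∧
        (∀ g : Fin m, g ∈ S ↔ ∃ i : Fin n, g ∈ X i) ∧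
        (∀ i j : Fin n, X j ≠ ∅ → ∃ g ∈ X j,
          ((X j).erase g).sum (v i) ≤ (X i).sum (v i)) with hP
      have hsne : (Finset.univ.filter P).Nonempty := by
        obtain ⟨X0, h1, h2, h3⟩ := IH
        exact ⟨X0, Finset.mem_filter.mpr ⟨Finset.mem_univ _, h1, h2, h3⟩⟩
      obtain ⟨X, hXmem, hXmax⟩ := Finset.exists_max_image (Finset.univ.filter P)
        (fun X => ∑ i, (X i).sum (v i)) hsne
      rw [Finset.mem_filter] at hXmem
      obtain ⟨-, hXd, hXc, hXe⟩ := hXmem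
      -- there exists an unenvied agent
      have hunenvied : ∃ i0 : Fin n, ∀ j, (X i0).sum (v j) ≤ (X j).sum (v j) := by
        by_contra hcon
        push_neg at hcon
        choose f hf using hcon
        -- f i envies i : (X (f i)).sum (v (f i)) < (X i).sum (v (f i))
        obtain ⟨j, p, hp, hper⟩ := stmt14_periodic_point f
        set O : Finset (Fin n) := (Finset.range p).image (fun s => f^[s] j) with hO
        have hcollapse : ∀ k r, f^[p * k + r] j = f^[r] j := by
          intro k
          induction k with
          | zero => simp
          | succ k ih =>
            intro r
            have h1 : p * (k + 1) + r = (p * k + r) + p := by ring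
            rw [h1, Function.iterate_add_apply, hper, ih]
        have horb : ∀ t, f^[t] j ∈ O := by
          intro t
          have h1 : p * (t / p) + t % p = t := Nat.div_add_mod t p
          have h2 : f^[t] j = f^[t % p] j := by
            conv_lhs => rw [← h1]
            exact hcollapse _ _
          rw [h2]
          exact Finset.mem_image.mpr ⟨t % p, Finset.mem_range.mpr (Nat.mod_lt _ hp), rfl⟩
        have hjO : j ∈ O := by
          have := horb 0; simpa using this
        set σ : Fin n → Fin n := fun x => if x ∈ O then f^[p - 1] x else x with hσ
        have hσO : ∀ x ∈ O, σ x ∈ O ∧ f (σ x) = x := by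
          intro x hx
          obtain ⟨s, -, rfl⟩ := Finset.mem_image.mp hx
          have hs1 : σ (f^[s] j) = f^[(p - 1) + s] j := by
            rw [hσ]; simp only [if_pos hx]
            exact (Function.iterate_add_apply f (p - 1) s j).symm
          constructor
          · rw [hs1]; exact horb _
          · rw [hs1, ← Function.iterate_succ_apply' f ((p - 1) + s) j]
            show f^[(p - 1) + s + 1] j = f^[s] j
            have : (p - 1) + s + 1 = s + p := by omega
            rw [this, Function.iterate_add_apply, hper]
        have himp : ∀ i, (X i).sum (v i) ≤ (X (σ i)).sum (v i) := by
          intro i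
          by_cases hi : i ∈ O
          · obtain ⟨-, hfi⟩ := hσO i hi
            have := hf (σ i)
            rw [hfi] at this
            exact this.le
          · rw [hσ]; simp only [if_neg hi]; exact le_rfl
        have hstrict : (X j).sum (v j) < (X (σ j)).sum (v j) := by
          obtain ⟨-, hfi⟩ := hσO j hjO
          have := hf (σ j)
          rw [hfi] at this
          exact this
        have hinj : Function.Injective σ := by
          intro x y hxy
          by_cases hx : x ∈ O <;> by_cases hy : y ∈ O
          · have h1 := (hσO x hx).2
            have h2 := (hσO y hy).2
            rw [← h1, ← h2, hxy]
          · exfalso; apply hy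
            have := (hσO x hx).1
            rw [hxy] at this
            have hyy : σ y = y := by rw [hσ]; simp only [if_neg hy]
            rwa [hyy] at this
          · exfalso; apply hx
            have := (hσO y hy).1
            rw [← hxy] at this
            have hxx : σ x = x := by rw [hσ]; simp only [if_neg hx]
            rwa [hxx] at this
          · have hyy : σ y = y := by rw [hσ]; simp only [if_neg hy]
            have hxx : σ x = x := by rw [hσ]; simp only [if_neg hx]
            rw [← hxx, ← hyy, hxy]
        have hsurj : Function.Surjective σ := Finite.injective_iff_surjective.mp hinj
        -- the permuted allocation
        have hYP : P (fun i => X (σ i)) := by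
          refine ⟨fun i j hij => hXd _ _ (fun h => hij (hinj h)), ?_, ?_⟩
          · intro g
            rw [hXc g]
            constructor
            · rintro ⟨k, hk⟩
              obtain ⟨i, rfl⟩ := hsurj k
              exact ⟨i, hk⟩
            · rintro ⟨i, hi⟩
              exact ⟨σ i, hi⟩
          · intro i j hj
            obtain ⟨g, hg, hle⟩ := hXe i (σ j) hj
            exact ⟨g, hg, hle.trans (himp i)⟩
        have hle := hXmax (fun i => X (σ i))
          (Finset.mem_filter.mpr ⟨Finset.mem_univ _, hYP⟩)
        have hlt : ∑ i, (X i).sum (v i) < ∑ i, (X (σ i)).sum (v i) :=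
          Finset.sum_lt_sum (fun i _ => himp i) ⟨j, Finset.mem_univ _, hstrict⟩
        linarith
      obtain ⟨i0, hi0⟩ := hunenvied
      have hanotin : ∀ k, a ∉ X k := fun k h => ha ((hXc a).mpr ⟨k, h⟩)
      refine ⟨Function.update X i0 (insert a (X i0)), ?_, ?_, ?_⟩
      · intro i j hij
        by_cases hi : i = i0 <;> by_cases hj : j = i0
        · exact absurd (hi.trans hj.symm) hij
        · subst hi
          rw [Function.update_self, Function.update_of_ne hj]
          rw [Finset.disjoint_insert_left]
          exact ⟨hanotin j, hXd _ _ hij⟩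
        · subst hj
          rw [Function.update_self, Function.update_of_ne hi]
          rw [Finset.disjoint_insert_right]
          exact ⟨hanotin i, hXd _ _ hij⟩
        · rw [Function.update_of_ne hi, Function.update_of_ne hj]
          exact hXd _ _ hij
      · intro g
        constructor
        · intro hg
          rcases Finset.mem_insert.mp hg with rfl | hg
          · exact ⟨i0, by rw [Function.update_self]; exact Finset.mem_insert_self _ _⟩
          · obtain ⟨k, hk⟩ := (hXc g).mp hg
            by_cases hki : k = i0
            · subst hki
              exact ⟨k, by rw [Function.update_self]; exact Finset.mem_insert_of_mem hk⟩
            · exact ⟨k, by rw [Function.update_of_ne hki]; exact hk⟩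
        · rintro ⟨i, hi⟩
          by_cases hii : i = i0
          · subst hii
            rw [Function.update_self, Finset.mem_insert] at hi
            rcases hi with rfl | hi
            · exact Finset.mem_insert_self _ _
            · exact Finset.mem_insert_of_mem ((hXc g).mpr ⟨i, hi⟩)
          · rw [Function.update_of_ne hii] at hi
            exact Finset.mem_insert_of_mem ((hXc g).mpr ⟨i, hi⟩)
      · intro i j hj
        have hgrow : ∀ w : Fin n, (X i).sum (v w) ≤ (Function.update X i0 (insert a (X i0)) i).sum (v w) := by
          intro w
          by_cases hii : i = i0
          · subst hii
            rw [Function.update_self, Finset.sum_insert (hanotin _)]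
            have := hv w a
            linarith
          · rw [Function.update_of_ne hii]
        by_cases hji : j = i0
        · subst hji
          rw [Function.update_self]
          refine ⟨a, Finset.mem_insert_self _ _, ?_⟩
          rw [Finset.erase_insert (hanotin _)]
          exact (hi0 i).trans (hgrow i)
        · rw [Function.update_of_ne hji] at hj ⊢
          obtain ⟨g, hg, hle⟩ := hXe i j hj
          exact ⟨g, hg, hle.trans (hgrow i)⟩
  obtain ⟨X, h1, h2, h3⟩ := main Finset.univ
  exact ⟨X, h1, fun g => (h2 g).mp (Finset.mem_univ g), h3⟩
end
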